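/- arXiv:math/9903175 — 3 statements merged into one kernel-verified Lean document; each statement's English description precedes it below -/
import Mathlib

section
/- Let V be a finite-dimensional complex vector space (with its standard topology), G ⊆ GL(V) a finite subgroup, and N a normal subgroup of G. Let S = ⋃_{η ∈ G∖N} Fix(η), which is a closed G-invariant subset of V. Then the natural map of orbit spaces (V∖S)/N → (V∖S)/G is a covering map. -/
/-- Let `N` be a normal subgroup of a finite subgroup `G ⊆ GL(V)`, and let `S`
be the union of the fixed spaces of the elements of `G \ N`.  Then the natural
map of orbit spaces `(V∖S)/N → (V∖S)/G` is a covering map. -/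
theorem orbitSpace_map_isCoveringMap
    {V : Type*} [NormedAddCommGroup V] [NormedSpace ℂ V] [FiniteDimensional ℂ V]
    (G N : Subgroup (V ≃ₗ[ℂ] V)) (hGfin : Finite G) (hNG : N ≤ G)
    (hnorm : ∀ g ∈ G, ∀ n ∈ N, g * n * g⁻¹ ∈ N)
    (S : Set V)
    (hS : S = ⋃ η ∈ (G : Set (V ≃ₗ[ℂ] V)) \ (N : Set (V ≃ₗ[ℂ] V)), {v : V | η v = v}) :
    IsCoveringMap
      (Quot.map (id : {x : V // x ∉ S} → {x : V // x ∉ S})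
        (fun _ _ h => ⟨h.choose, hNG h.choose_spec.1, h.choose_spec.2⟩) :
        Quot (fun a b : {x : V // x ∉ S} => ∃ n ∈ N, n a.1 = b.1) →
        Quot (fun a b : {x : V // x ∉ S} => ∃ g ∈ G, g a.1 = b.1)) := by
  classical
  haveI := hGfin
  -- basic application facts for the automorphism group
  have happ : ∀ (g h : V ≃ₗ[ℂ] V) (x : V), (g * h) x = g (h x) := fun _ _ _ => rfl
  have hone : ∀ x : V, (1 : V ≃ₗ[ℂ] V) x = x := fun _ => rfl
  have hinv : ∀ (g : V ≃ₗ[ℂ] V) (x : V), g⁻¹ (g x) = x := fun g x => g.symm_apply_apply x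
  have hinv' : ∀ (g : V ≃ₗ[ℂ] V) (x : V), g (g⁻¹ x) = x := fun g x => g.apply_symm_apply x
  have hcont : ∀ g : V ≃ₗ[ℂ] V, Continuous (g : V → V) := fun g => by
    simpa using (g : V →ₗ[ℂ] V).continuous_of_finiteDimensional
  -- stabilizers of points outside S are in N
  have hstab : ∀ g ∈ G, ∀ x : V, x ∉ S → g x = x → g ∈ N := by
    intro g hg x hx hfix
    by_contra hn
    exact hx (hS ▸ Set.mem_biUnion (show g ∈ (G : Set (V ≃ₗ[ℂ] V)) \ (N : Set (V ≃ₗ[ℂ] V)) from ⟨hg, hn⟩) hfix)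
  -- S is G-invariant
  have hSinv : ∀ g ∈ G, ∀ x : V, x ∉ S → g x ∉ S := by
    intro g hg x hx hmem
    rw [hS] at hmem
    obtain ⟨η, hη, hfix⟩ := Set.mem_iUnion₂.1 hmem
    apply hx
    rw [hS]
    refine Set.mem_biUnion (show g⁻¹ * η * g ∈ (G : Set (V ≃ₗ[ℂ] V)) \ (N : Set (V ≃ₗ[ℂ] V)) from ⟨?_, ?_⟩) ?_
    · exact mul_mem (mul_mem (inv_mem hg) hη.1) hg
    · intro hin
      apply hη.2
      have h2 := hnorm g hg _ hin
      have h3 : g * (g⁻¹ * η * g) * g⁻¹ = η := by group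
      rw [h3] at h2
      exact h2
    · show (g⁻¹ * η * g) x = x
      rw [happ, happ]
      rw [show η (g x) = g x from hfix, hinv]
  -- equivalence of the orbit relations
  have mkEqv : ∀ (H : Subgroup (V ≃ₗ[ℂ] V)),
      Equivalence (fun a b : {x : V // x ∉ S} => ∃ n ∈ H, n a.1 = b.1) := by
    intro H
    constructor
    · exact fun a => ⟨1, one_mem H, hone a.1⟩
    · rintro a b ⟨n, hn, hab⟩
      exact ⟨n⁻¹, inv_mem hn, by rw [← hab, hinv]⟩
    · rintro a b c ⟨n, hn, hab⟩ ⟨m, hm, hbc⟩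
      exact ⟨m * n, mul_mem hm hn, by rw [happ, hab, hbc]⟩
  have quotEq : ∀ {α : Type _} (r : α → α → Prop), Equivalence r → ∀ x y : α,
      Quot.mk r x = Quot.mk r y ↔ r x y := by
    intro α r hr x y
    rw [Quot.eq]
    exact hr.eqvGen_iff
  -- the quotient maps are open
  have hopenMk : ∀ (H : Subgroup (V ≃ₗ[ℂ] V)), H ≤ G →
      IsOpenMap (Quot.mk (fun a b : {x : V // x ∉ S} => ∃ n ∈ H, n a.1 = b.1)) := by
    intro H hH O hO
    rw [isOpen_coinduced]
    have hU : Quot.mk _ ⁻¹' (Quot.mk (fun a b : {x : V // x ∉ S} => ∃ n ∈ H, n a.1 = b.1) '' O)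
        = ⋃ h : {h : V ≃ₗ[ℂ] V // h ∈ H},
          (fun x : {x : V // x ∉ S} =>
            (⟨(h : V ≃ₗ[ℂ] V) x.1, hSinv _ (hH h.2) _ x.2⟩ : {x : V // x ∉ S})) ⁻¹' O := by
      ext x
      simp only [Set.mem_preimage, Set.mem_image, Set.mem_iUnion]
      constructor
      · rintro ⟨y, hyO, hyx⟩
        obtain ⟨n, hn, hnx⟩ := (quotEq _ (mkEqv H) _ _).1 hyx.symm
        refine ⟨⟨n, hn⟩, ?_⟩
        show (⟨n x.1, _⟩ : {x : V // x ∉ S}) ∈ O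
        have : (⟨n x.1, hSinv _ (hH hn) _ x.2⟩ : {x : V // x ∉ S}) = y := Subtype.ext hnx
        rw [this]
        exact hyO
      · rintro ⟨h, hhO⟩
        exact ⟨_, hhO, Quot.sound ⟨(h : V ≃ₗ[ℂ] V)⁻¹, inv_mem h.2, hinv _ _⟩⟩
    rw [hU]
    exact isOpen_iUnion fun h =>
      hO.preimage (Continuous.subtype_mk ((hcont h.1).comp continuous_subtype_val) _)
  set relN : {x : V // x ∉ S} → {x : V // x ∉ S} → Prop :=
    fun a b => ∃ n ∈ N, n a.1 = b.1 with hrelN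
  set relG : {x : V // x ∉ S} → {x : V // x ∉ S} → Prop :=
    fun a b => ∃ g ∈ G, g a.1 = b.1 with hrelG
  have main : ∀ p : Quot relN → Quot relG,
      (∀ x, p (Quot.mk relN x) = Quot.mk relG x) → IsCoveringMap p := by
    intro p hpmk
    have hpcont : Continuous p := by
      refine isQuotientMap_quot_mk.continuous_iff.mpr ?_
      have : (p ∘ Quot.mk relN) = fun x => Quot.mk relG x := funext hpmk
      rw [this]
      exact continuous_quot_mk
    intro b
    obtain ⟨v, rfl⟩ := Quot.exists_rep b
    -- construct the small neighbourhood U of v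
    set A : {g : V ≃ₗ[ℂ] V // g ∈ G} → Set V := fun g =>
      if (g : V ≃ₗ[ℂ] V) v.1 = v.1 then Set.univ else
        {x : V | dist ((g : V ≃ₗ[ℂ] V) x) ((g : V ≃ₗ[ℂ] V) v.1)
            < dist ((g : V ≃ₗ[ℂ] V) v.1) v.1 / 2 ∧
          dist x v.1 < dist ((g : V ≃ₗ[ℂ] V) v.1) v.1 / 2} with hA
    set U : Set V := ⋂ g, A g with hUdef
    have hUopen : IsOpen U := by
      refine isOpen_iInter_of_finite fun g => ?_
      rw [hA]
      dsimp only
      split_ifs with h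
      · exact isOpen_univ
      · exact IsOpen.and (isOpen_lt ((hcont g.1).dist continuous_const) continuous_const)
          (isOpen_lt (continuous_id.dist continuous_const) continuous_const)
    have hvU : v.1 ∈ U := by
      refine Set.mem_iInter.2 fun g => ?_
      rw [hA]
      dsimp only
      split_ifs with h
      · trivial
      · have hd : 0 < dist ((g : V ≃ₗ[ℂ] V) v.1) v.1 := dist_pos.2 h
        exact ⟨by simpa [dist_self] using half_pos hd, by simpa [dist_self] using half_pos hd⟩
    have hAmem : ∀ g : {g : V ≃ₗ[ℂ] V // g ∈ G}, ∀ x : V, x ∈ U →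
        ¬((g : V ≃ₗ[ℂ] V) v.1 = v.1) →
        dist ((g : V ≃ₗ[ℂ] V) x) ((g : V ≃ₗ[ℂ] V) v.1) < dist ((g : V ≃ₗ[ℂ] V) v.1) v.1 / 2 ∧
          dist x v.1 < dist ((g : V ≃ₗ[ℂ] V) v.1) v.1 / 2 := by
      intro g x hx hne
      have h1 := Set.mem_iInter.1 hx g
      rw [hA] at h1
      dsimp only at h1
      rwa [if_neg hne] at h1
    have hkey : ∀ g ∈ G, ∀ x : V, x ∈ U → g x ∈ U → g v.1 = v.1 := by
      intro g hg x hxU hgxU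
      by_contra hne
      have h1 := (hAmem ⟨g, hg⟩ x hxU hne).1
      have h2 := (hAmem ⟨g, hg⟩ (g x) hgxU hne).2
      have h3 := dist_triangle ((g : V ≃ₗ[ℂ] V) v.1) (g x) v.1
      rw [dist_comm ((g : V ≃ₗ[ℂ] V) v.1) (g x)] at h3
      simp only at h1 h2 h3
      linarith
    have hkeyN : ∀ g ∈ G, ∀ x : V, x ∈ U → g x ∈ U → g ∈ N :=
      fun g hg x hx hgx => hstab g hg v.1 v.2 (hkey g hg x hx hgx)
    -- the coset uniqueness lemma
    have L1 : ∀ g g' n : V ≃ₗ[ℂ] V, g ∈ G → g' ∈ G → n ∈ N → ∀ x : V,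
        g x ∈ U → g' (n x) ∈ U → g' * g⁻¹ ∈ N := by
      intro g g' n hg hg' hn x hgx hg'nx
      have h1 : g' * n * g⁻¹ ∈ G := mul_mem (mul_mem hg' (hNG hn)) (inv_mem hg)
      have happ2 : (g' * n * g⁻¹) (g x) = g' (n x) := by
        rw [happ, happ, hinv]
      have hN1 : g' * n * g⁻¹ ∈ N := hkeyN _ h1 (g x) hgx (by rw [happ2]; exact hg'nx)
      have hN2 : g * n⁻¹ * g⁻¹ ∈ N := hnorm g hg n⁻¹ (inv_mem hn)
      have heq : g' * g⁻¹ = (g' * n * g⁻¹) * (g * n⁻¹ * g⁻¹) := by group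
      rw [heq]
      exact mul_mem hN1 hN2

  -- the fiber: right cosets of N in G
    set relC : {g : V ≃ₗ[ℂ] V // g ∈ G} → {g : V ≃ₗ[ℂ] V // g ∈ G} → Prop :=
      fun a b => (a : V ≃ₗ[ℂ] V) * (b : V ≃ₗ[ℂ] V)⁻¹ ∈ N with hrelC
    have eqvC : Equivalence relC := by
      constructor
      · intro a
        show (a : V ≃ₗ[ℂ] V) * (a : V ≃ₗ[ℂ] V)⁻¹ ∈ N
        rw [show (a : V ≃ₗ[ℂ] V) * (a : V ≃ₗ[ℂ] V)⁻¹ = 1 by group]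
        exact one_mem N
      · intro a b h
        show (b : V ≃ₗ[ℂ] V) * (a : V ≃ₗ[ℂ] V)⁻¹ ∈ N
        rw [show (b : V ≃ₗ[ℂ] V) * (a : V ≃ₗ[ℂ] V)⁻¹
            = ((a : V ≃ₗ[ℂ] V) * (b : V ≃ₗ[ℂ] V)⁻¹)⁻¹ by group]
        exact inv_mem h
      · intro a b c h1 h2
        show (a : V ≃ₗ[ℂ] V) * (c : V ≃ₗ[ℂ] V)⁻¹ ∈ N
        rw [show (a : V ≃ₗ[ℂ] V) * (c : V ≃ₗ[ℂ] V)⁻¹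
            = ((a : V ≃ₗ[ℂ] V) * (b : V ≃ₗ[ℂ] V)⁻¹) * ((b : V ≃ₗ[ℂ] V) * (c : V ≃ₗ[ℂ] V)⁻¹)
            by group]
        exact mul_mem h1 h2
    letI : TopologicalSpace (Quot relC) := ⊥
    haveI hdisc : DiscreteTopology (Quot relC) := ⟨rfl⟩
    -- the base set
    set K : Set {x : V // x ∉ S} := {x | x.1 ∈ U} with hKdef
    have hKopen : IsOpen K := hUopen.preimage continuous_subtype_val
    set W : Set (Quot relG) := Quot.mk relG '' K with hWdef
    have hWopen : IsOpen W := hopenMk G le_rfl K hKopen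
    have hvW : Quot.mk relG v ∈ W := ⟨v, hvU, rfl⟩
    -- the sheet-index function
    set φ : Quot relN → Quot relC := fun e =>
      if h : ∃ gx : {g : V ≃ₗ[ℂ] V // g ∈ G} × {x : V // x ∉ S},
          Quot.mk relN gx.2 = e ∧ (gx.1 : V ≃ₗ[ℂ] V) gx.2.1 ∈ U then
        Quot.mk relC h.choose.1
      else Quot.mk relC ⟨1, one_mem G⟩ with hφ
    have Lφ : ∀ (x : {x : V // x ∉ S}) (g : {g : V ≃ₗ[ℂ] V // g ∈ G}),
        (g : V ≃ₗ[ℂ] V) x.1 ∈ U → φ (Quot.mk relN x) = Quot.mk relC g := by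
      intro x g hgx
      have hex : ∃ gx : {g : V ≃ₗ[ℂ] V // g ∈ G} × {x : V // x ∉ S},
          Quot.mk relN gx.2 = Quot.mk relN x ∧ (gx.1 : V ≃ₗ[ℂ] V) gx.2.1 ∈ U :=
        ⟨(g, x), rfl, hgx⟩
      rw [hφ]
      dsimp only
      rw [dif_pos hex]
      obtain ⟨hc1, hc2⟩ := hex.choose_spec
      obtain ⟨n, hn, hnx⟩ := (quotEq _ (mkEqv N) _ _).1 hc1
      apply Quot.sound
      show (hex.choose.1 : V ≃ₗ[ℂ] V) * (g : V ≃ₗ[ℂ] V)⁻¹ ∈ N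
      have h2 : (g : V ≃ₗ[ℂ] V) (n hex.choose.2.1) ∈ U := by rw [hnx]; exact hgx
      have h3 := L1 (hex.choose.1 : V ≃ₗ[ℂ] V) (g : V ≃ₗ[ℂ] V) n
        hex.choose.1.2 g.2 hn hex.choose.2.1 hc2 h2
      rw [show (hex.choose.1 : V ≃ₗ[ℂ] V) * (g : V ≃ₗ[ℂ] V)⁻¹
          = ((g : V ≃ₗ[ℂ] V) * (hex.choose.1 : V ≃ₗ[ℂ] V)⁻¹)⁻¹ by group]
      exact inv_mem h3
    -- the local sections
    set ψ : Quot relG × Quot relC → Quot relN := fun bc =>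
      if h : ∃ gx : {g : V ≃ₗ[ℂ] V // g ∈ G} × {x : V // x ∉ S},
          Quot.mk relG gx.2 = bc.1 ∧ Quot.mk relC gx.1 = bc.2 ∧ gx.2.1 ∈ U then
        Quot.mk relN ⟨((h.choose.1 : V ≃ₗ[ℂ] V))⁻¹ h.choose.2.1,
          hSinv _ (inv_mem h.choose.1.2) _ h.choose.2.2⟩
      else Quot.mk relN v with hψ
    have Lψ : ∀ (x : {x : V // x ∉ S}) (g : {g : V ≃ₗ[ℂ] V // g ∈ G}), x.1 ∈ U →
        ψ (Quot.mk relG x, Quot.mk relC g)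
          = Quot.mk relN ⟨(g : V ≃ₗ[ℂ] V)⁻¹ x.1, hSinv _ (inv_mem g.2) _ x.2⟩ := by
      intro x g hx
      have hex : ∃ gx : {g : V ≃ₗ[ℂ] V // g ∈ G} × {x : V // x ∉ S},
          Quot.mk relG gx.2 = Quot.mk relG x ∧ Quot.mk relC gx.1 = Quot.mk relC g ∧
            gx.2.1 ∈ U :=
        ⟨(g, x), rfl, rfl, hx⟩
      rw [hψ]
      dsimp only
      rw [dif_pos hex]
      obtain ⟨hc1, hc2, hc3⟩ := hex.choose_spec
      obtain ⟨m, hm, hmx⟩ := (quotEq _ (mkEqv G) _ _).1 hc1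
      have hk : (hex.choose.1 : V ≃ₗ[ℂ] V) * (g : V ≃ₗ[ℂ] V)⁻¹ ∈ N :=
        (quotEq _ eqvC _ _).1 hc2
      have hmN : m ∈ N := hkeyN m hm hex.choose.2.1 hc3 (by rw [hmx]; exact hx)
      apply Quot.sound
      refine ⟨(g : V ≃ₗ[ℂ] V)⁻¹ * m * (hex.choose.1 : V ≃ₗ[ℂ] V), ?_, ?_⟩
      · rw [show (g : V ≃ₗ[ℂ] V)⁻¹ * m * (hex.choose.1 : V ≃ₗ[ℂ] V)
            = ((g : V ≃ₗ[ℂ] V)⁻¹ * m * ((g : V ≃ₗ[ℂ] V)⁻¹)⁻¹)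
              * ((g : V ≃ₗ[ℂ] V)⁻¹ * ((hex.choose.1 : V ≃ₗ[ℂ] V) * (g : V ≃ₗ[ℂ] V)⁻¹)
                * ((g : V ≃ₗ[ℂ] V)⁻¹)⁻¹) by group]
        exact mul_mem (hnorm _ (inv_mem g.2) m hmN) (hnorm _ (inv_mem g.2) _ hk)
      · show ((g : V ≃ₗ[ℂ] V)⁻¹ * m * (hex.choose.1 : V ≃ₗ[ℂ] V))
            ((hex.choose.1 : V ≃ₗ[ℂ] V)⁻¹ hex.choose.2.1) = (g : V ≃ₗ[ℂ] V)⁻¹ x.1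
        rw [happ, hinv', happ, hmx]
    -- characterisation of the source
    have hpW : ∀ x : {x : V // x ∉ S}, p (Quot.mk relN x) ∈ W ↔
        ∃ g : {g : V ≃ₗ[ℂ] V // g ∈ G}, (g : V ≃ₗ[ℂ] V) x.1 ∈ U := by
      intro x
      rw [hpmk]
      constructor
      · rintro ⟨y, hyK, hyx⟩
        obtain ⟨g, hg, hgx⟩ := (quotEq _ (mkEqv G) _ _).1 hyx.symm
        exact ⟨⟨g, hg⟩, by rw [show g x.1 = y.1 from hgx]; exact hyK⟩
      · rintro ⟨g, hgx⟩
        refine ⟨⟨(g : V ≃ₗ[ℂ] V) x.1, hSinv _ g.2 _ x.2⟩, hgx, ?_⟩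
        exact Quot.sound ⟨(g : V ≃ₗ[ℂ] V)⁻¹, inv_mem g.2, hinv _ _⟩
    -- the sheets are open
    have hsheet_open : ∀ g : {g : V ≃ₗ[ℂ] V // g ∈ G},
        IsOpen (Quot.mk relN '' {x : {x : V // x ∉ S} | (g : V ≃ₗ[ℂ] V) x.1 ∈ U}) := fun g =>
      hopenMk N hNG _ ((hUopen.preimage (hcont g.1)).preimage continuous_subtype_val)
    -- continuity of the forward map
    have hφcont : ContinuousOn (fun e => (p e, φ e)) (p ⁻¹' W) := by
      intro e he
      apply ContinuousAt.continuousWithinAt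
      obtain ⟨x, rfl⟩ := Quot.exists_rep e
      obtain ⟨g, hgx⟩ := (hpW x).1 he
      refine ContinuousAt.prodMk hpcont.continuousAt ?_
      have hnb : Quot.mk relN '' {y : {x : V // x ∉ S} | (g : V ≃ₗ[ℂ] V) y.1 ∈ U}
          ∈ nhds (Quot.mk relN x) := (hsheet_open g).mem_nhds ⟨x, hgx, rfl⟩
      have hev : φ =ᶠ[nhds (Quot.mk relN x)] fun _ => Quot.mk relC g := by
        filter_upwards [hnb] with e' he'
        obtain ⟨y, hy, rfl⟩ := he'
        exact Lφ y g hy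
      exact ContinuousAt.congr continuousAt_const hev.symm
    -- continuity of the inverse map, one sheet at a time
    have hρ : ∀ g : {g : V ≃ₗ[ℂ] V // g ∈ G},
        ContinuousOn (fun b => ψ (b, Quot.mk relC g)) W := by
      intro g
      rw [continuousOn_iff_continuous_restrict]
      set qKW : K → W := fun k => ⟨Quot.mk relG k.1, ⟨k.1, k.2, rfl⟩⟩ with hqKW
      have hqKWcont : Continuous qKW :=
        Continuous.subtype_mk (continuous_quot_mk.comp continuous_subtype_val) _
      have hqKWsurj : Function.Surjective qKW := by
        rintro ⟨w, x, hx, rfl⟩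
        exact ⟨⟨x, hx⟩, rfl⟩
      have hqKWopen : IsOpenMap qKW := by
        intro O hO
        have himg : qKW '' O = Subtype.val ⁻¹' (Quot.mk relG '' (Subtype.val '' O)) := by
          ext w
          constructor
          · rintro ⟨k, hkO, rfl⟩
            exact ⟨k.1, ⟨k, hkO, rfl⟩, rfl⟩
          · rintro ⟨x, ⟨k, hkO, rfl⟩, hx⟩
            exact ⟨k, hkO, Subtype.ext hx⟩
        rw [himg]
        exact (hopenMk G le_rfl _ (hKopen.isOpenMap_subtype_val _ hO)).preimage
          continuous_subtype_val
      have hq := hqKWopen.isQuotientMap hqKWcont hqKWsurj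
      rw [hq.continuous_iff]
      have hcomp : (W.domRestrict (fun b => ψ (b, Quot.mk relC g)) ∘ qKW)
          = fun k : K => Quot.mk relN
              ⟨(g : V ≃ₗ[ℂ] V)⁻¹ k.1.1, hSinv _ (inv_mem g.2) _ k.1.2⟩ := by
        funext k
        exact Lψ k.1 g k.2
      rw [hcomp]
      exact continuous_quot_mk.comp (Continuous.subtype_mk
        ((hcont _).comp (continuous_subtype_val.comp continuous_subtype_val)) _)
    -- continuity of the inverse map
    have hψcont : ContinuousOn ψ (W ×ˢ Set.univ) := by
      rintro ⟨b, c⟩ ⟨hbW, -⟩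
      obtain ⟨g, rfl⟩ := Quot.exists_rep c
      have h1 : ContinuousWithinAt (fun bc : Quot relG × Quot relC => ψ (bc.1, Quot.mk relC g))
          (W ×ˢ Set.univ) (b, Quot.mk relC g) := by
        refine ContinuousWithinAt.comp (x := (b, Quot.mk relC g)) ((hρ g) b hbW) continuousWithinAt_fst ?_
        intro y hy
        exact hy.1
      refine h1.congr_of_eventuallyEq ?_ rfl
      have hmem : Set.univ ×ˢ {Quot.mk relC g}
          ∈ nhdsWithin (b, Quot.mk relC g) (W ×ˢ Set.univ) :=
        mem_nhdsWithin_of_mem_nhds ((isOpen_univ.prod (isOpen_discrete _)).mem_nhds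
          ⟨trivial, rfl⟩)
      filter_upwards [hmem] with bc hbc
      rw [show bc = (bc.1, Quot.mk relC g) from Prod.ext rfl hbc.2]
    -- assemble the trivialization
    refine IsEvenlyCovered.to_isEvenlyCovered_preimage (IsEvenlyCovered.of_trivialization (t := {
        toFun := fun e => (p e, φ e)
        invFun := ψ
        source := p ⁻¹' W
        target := W ×ˢ Set.univ
        map_source' := fun e he => ⟨he, trivial⟩
        map_target' := ?_
        left_inv' := ?_
        right_inv' := ?_
        open_source := hWopen.preimage hpcont
        open_target := hWopen.prod isOpen_univ
        continuousOn_toFun := hφcont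
        continuousOn_invFun := hψcont
        baseSet := W
        open_baseSet := hWopen
        source_eq := rfl
        target_eq := rfl
        proj_toFun := fun e _ => rfl }) hvW)
    · -- map_target'
      rintro ⟨b, c⟩ ⟨hb, -⟩
      obtain ⟨g, rfl⟩ := Quot.exists_rep c
      obtain ⟨x, hxK, rfl⟩ := hb
      show ψ (Quot.mk relG x, Quot.mk relC g) ∈ p ⁻¹' W
      rw [Lψ x g hxK]
      show p (Quot.mk relN _) ∈ W
      rw [hpmk]
      have : Quot.mk relG (⟨(g : V ≃ₗ[ℂ] V)⁻¹ x.1, hSinv _ (inv_mem g.2) _ x.2⟩ :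
          {x : V // x ∉ S}) = Quot.mk relG x :=
        Quot.sound ⟨(g : V ≃ₗ[ℂ] V), g.2, hinv' _ _⟩
      rw [this]
      exact ⟨x, hxK, rfl⟩
    · -- left_inv'
      intro e he
      obtain ⟨x, rfl⟩ := Quot.exists_rep e
      obtain ⟨g, hgx⟩ := (hpW x).1 he
      show ψ (p (Quot.mk relN x), φ (Quot.mk relN x)) = Quot.mk relN x
      rw [hpmk, Lφ x g hgx]
      have hyx : Quot.mk relG x = Quot.mk relG (⟨(g : V ≃ₗ[ℂ] V) x.1, hSinv _ g.2 _ x.2⟩ :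
          {x : V // x ∉ S}) :=
        Quot.sound ⟨(g : V ≃ₗ[ℂ] V), g.2, rfl⟩
      rw [hyx, Lψ _ g hgx]
      exact congrArg (Quot.mk relN) (Subtype.ext (hinv (g : V ≃ₗ[ℂ] V) x.1))
    · -- right_inv'
      rintro ⟨b, c⟩ ⟨hb, -⟩
      obtain ⟨g, rfl⟩ := Quot.exists_rep c
      obtain ⟨x, hxK, rfl⟩ := hb
      show (fun e => (p e, φ e)) (ψ (Quot.mk relG x, Quot.mk relC g))
          = (Quot.mk relG x, Quot.mk relC g)
      rw [Lψ x g hxK]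
      dsimp only
      refine Prod.ext ?_ ?_
      · rw [hpmk]
        exact Quot.sound ⟨(g : V ≃ₗ[ℂ] V), g.2, hinv' _ _⟩
      · refine Lφ _ g ?_
        show (g : V ≃ₗ[ℂ] V) ((g : V ≃ₗ[ℂ] V)⁻¹ x.1) ∈ U
        rw [hinv']
        exact hxK
  exact main _ fun _ => rfl
end

section
/- Let V be a finite-dimensional complex vector space with its standard topology, and let Z = Z₁ ∪ … ∪ Z_k be a finite union of complex linear subspaces of V, each of complex codimension at least 2. Then the complement V∖Z is simply connected (in particular, path-connected). -/
open Set Metric unitInterval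

attribute [local instance] Path.Homotopic.setoid

section RealAux

variable {V : Type*} [NormedAddCommGroup V] [NormedSpace ℝ V]

/-- The straight segment, as a path inside a set `u`. -/
noncomputable def mySeg {u : Set V} (a b : u) (h : segment ℝ (a : V) (b : V) ⊆ u) :
    Path a b where
  toFun t := ⟨(1 - (t : ℝ)) • (a : V) + (t : ℝ) • (b : V),
    h ⟨1 - t, t, by linarith [t.2.2], t.2.1, by ring, rfl⟩⟩
  continuous_toFun := by
    apply Continuous.subtype_mk
    fun_prop
  source' := by ext; simp
  target' := by ext; simp

lemma mySeg_apply {u : Set V} (a b : u) (h : segment ℝ (a : V) (b : V) ⊆ u) (t : I) :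
    ((mySeg a b h t : u) : V) = (1 - (t : ℝ)) • (a : V) + (t : ℝ) • (b : V) := rfl

lemma mySeg_mem_segment {u : Set V} (a b : u) (h : segment ℝ (a : V) (b : V) ⊆ u) (t : I) :
    ((mySeg a b h t : u) : V) ∈ segment ℝ (a : V) (b : V) :=
  ⟨1 - t, t, by linarith [t.2.2], t.2.1, by ring, rfl⟩

lemma mySeg_symm {u : Set V} (a b : u) (h : segment ℝ (a : V) (b : V) ⊆ u)
    (h' : segment ℝ (b : V) (a : V) ⊆ u) :
    (mySeg a b h).symm = mySeg b a h' := by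
  apply Path.ext
  funext t
  apply Subtype.ext
  show ((mySeg a b h (σ t) : u) : V) = _
  rw [mySeg_apply, mySeg_apply, unitInterval.coe_symm_eq]
  module

/-- Any two paths with the same endpoints whose images lie in a common convex
subset `C` of `u` are homotopic inside `u`. -/
lemma convex_homotopic {u C : Set V} (hC : Convex ℝ C) (hCu : C ⊆ u) {x y : u}
    (a b : Path x y) (ha : ∀ t, (a t : V) ∈ C) (hb : ∀ t, (b t : V) ∈ C) :
    a.Homotopic b := by
  haveI : ContractibleSpace C := hC.contractibleSpace ⟨_, ha 0⟩
  have hx : (x : V) ∈ C := by have := ha 0; rwa [a.source] at this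
  have hy : (y : V) ∈ C := by have := ha 1; rwa [a.target] at this
  let ι : C(C, u) := ⟨fun q => ⟨q.1, hCu q.2⟩, by fun_prop⟩
  let a' : Path (⟨(x : V), hx⟩ : C) ⟨(y : V), hy⟩ :=
    { toFun := fun t => ⟨(a t : V), ha t⟩
      continuous_toFun := by fun_prop
      source' := by
        refine Subtype.ext ?_
        show ((a 0 : u) : V) = (x : V)
        exact congrArg Subtype.val a.source
      target' := by
        refine Subtype.ext ?_
        show ((a 1 : u) : V) = (y : V)
        exact congrArg Subtype.val a.target }
  let b' : Path (⟨(x : V), hx⟩ : C) ⟨(y : V), hy⟩ :=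
    { toFun := fun t => ⟨(b t : V), hb t⟩
      continuous_toFun := by fun_prop
      source' := by
        refine Subtype.ext ?_
        show ((b 0 : u) : V) = (x : V)
        exact congrArg Subtype.val b.source
      target' := by
        refine Subtype.ext ?_
        show ((b 1 : u) : V) = (y : V)
        exact congrArg Subtype.val b.target }
  have h : a'.Homotopic b' := SimplyConnectedSpace.paths_homotopic a' b'
  have h2 := h.map ι
  have ea : a'.map ι.continuous = a := by
    apply Path.ext; funext t; apply Subtype.ext; rfl
  have eb : b'.map ι.continuous = b := by
    apply Path.ext; funext t; apply Subtype.ext; rfl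
  rwa [ea, eb] at h2

/-- A point avoiding finitely many proper subspaces exists. -/
lemma exists_avoid [FiniteDimensional ℝ V] (L : Finset (Submodule ℝ V))
    (hL : ∀ W ∈ L, W ≠ ⊤) : ∃ p : V, ∀ W ∈ L, p ∉ W := by
  by_contra hc
  push_neg at hc
  borelize V
  set μ := (Module.finBasis ℝ V).addHaar with hμ
  have h0 : μ (⋃ W ∈ L, (W : Set V)) = 0 :=
    (MeasureTheory.measure_biUnion_null_iff L.countable_toSet).2 fun W hW =>
      MeasureTheory.Measure.addHaar_submodule μ W (hL W hW)
  have huniv : (Set.univ : Set V) ⊆ ⋃ W ∈ L, (W : Set V) := by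
    intro p _
    obtain ⟨W, hW, hpW⟩ := hc p
    exact Set.mem_biUnion hW hpW
  have h1 : μ Set.univ = 0 := MeasureTheory.measure_mono_null huniv h0
  have h2 : 0 < μ Set.univ := isOpen_univ.measure_pos μ ⟨0, trivial⟩
  exact h2.ne' h1

/-- If `q` lies in the triangle with vertices `a, b, p`, belongs to `Z ≤ W`,
`a, b ∈ W` and `p ∉ W`, then `q` is on the segment `[a,b]`. -/
lemma hull_avoid {Z W : Submodule ℝ V} (hZW : Z ≤ W) {a b p q : V}
    (haW : a ∈ W) (hbW : b ∈ W) (hpW : p ∉ W)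
    (hq : q ∈ convexHull ℝ {a, b, p}) (hqZ : q ∈ Z) : q ∈ segment ℝ a b := by
  have h3 : ({a, b, p} : Set V) = insert p {a, b} := by
    ext w; simp only [Set.mem_insert_iff, Set.mem_singleton_iff]; tauto
  rw [h3, convexHull_insert ⟨a, by simp⟩, mem_convexJoin] at hq
  obtain ⟨p', hp', z, hz, hq⟩ := hq
  rw [Set.mem_singleton_iff] at hp'
  rw [convexHull_pair] at hz
  obtain ⟨u', v', hu, hv, huv, hque⟩ := hq
  rw [hp'] at hque
  subst hque
  have hzW : z ∈ W := by
    obtain ⟨α, β, hα, hβ, hαβ, rfl⟩ := hz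
    exact W.add_mem (W.smul_mem _ haW) (W.smul_mem _ hbW)
  rcases eq_or_lt_of_le hu with h0 | h0
  · have hv1 : v' = 1 := by linarith
    subst hv1
    simpa [← h0] using hz
  · exfalso
    apply hpW
    have hp : p = (u')⁻¹ • (u' • p + v' • z - v' • z) := by
      rw [add_sub_cancel_right, inv_smul_smul₀ (ne_of_gt h0)]
    rw [hp]
    exact W.smul_mem _ (W.sub_mem (hZW hqZ) (W.smul_mem _ hzW))

end RealAux

section Halves

variable {X : Type*} [TopologicalSpace X] {x y : X}

/-- The midpoint of the unit interval. -/
noncomputable def IMid : I := ⟨1/2, by norm_num, by norm_num⟩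

/-- First half of a path. -/
noncomputable def fstHalf (γ : Path x y) : Path x (γ IMid) where
  toFun t := γ ⟨(t : ℝ) / 2, ⟨by linarith [t.2.1], by linarith [t.2.2]⟩⟩
  continuous_toFun := by
    apply γ.continuous.comp
    apply Continuous.subtype_mk
    fun_prop
  source' := by
    show γ _ = x
    refine (congrArg γ (Subtype.ext (by norm_num) : _ = (0 : I))).trans ?_
    exact γ.source
  target' := by
    show γ _ = γ IMid
    exact congrArg γ (Subtype.ext (by show ((1 : I) : ℝ) / 2 = 1/2; norm_num))

/-- Second half of a path. -/
noncomputable def sndHalf (γ : Path x y) : Path (γ IMid) y where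
  toFun t := γ ⟨((t : ℝ) + 1) / 2, ⟨by linarith [t.2.1], by linarith [t.2.2]⟩⟩
  continuous_toFun := by
    apply γ.continuous.comp
    apply Continuous.subtype_mk
    fun_prop
  source' := by
    show γ _ = γ IMid
    exact congrArg γ (Subtype.ext (by show (((0 : I) : ℝ) + 1) / 2 = 1/2; norm_num))
  target' := by
    show γ _ = y
    refine (congrArg γ (Subtype.ext (by norm_num) : _ = (1 : I))).trans ?_
    exact γ.target

lemma fstHalf_apply (γ : Path x y) (t : I) (h : (t : ℝ) / 2 ∈ I) :
    fstHalf γ t = γ ⟨(t : ℝ) / 2, h⟩ := rfl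

lemma sndHalf_apply (γ : Path x y) (t : I) (h : ((t : ℝ) + 1) / 2 ∈ I) :
    sndHalf γ t = γ ⟨((t : ℝ) + 1) / 2, h⟩ := rfl

lemma halves_eq (γ : Path x y) : (fstHalf γ).trans (sndHalf γ) = γ := by
  apply Path.ext
  funext t
  rw [Path.trans_apply]
  split_ifs with h
  · exact congrArg γ (Subtype.ext (by show (2 * (t : ℝ)) / 2 = t; ring))
  · exact congrArg γ (Subtype.ext (by show ((2 * (t : ℝ) - 1) + 1) / 2 = t; ring))

/-- `(A ⬝ B) ⬝ (B⁻¹ ⬝ C)` is homotopic to `A ⬝ C`. -/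
lemma cancel_middle {x p z y : X} (A : Path x p) (B : Path p z) (C : Path p y) :
    ((A.trans B).trans (B.symm.trans C)).Homotopic (A.trans C) := by
  have s1 : ((A.trans B).trans (B.symm.trans C)).Homotopic
      (A.trans (B.trans (B.symm.trans C))) := ⟨Path.Homotopy.transAssoc A B (B.symm.trans C)⟩
  have s2 : (B.trans (B.symm.trans C)).Homotopic ((B.trans B.symm).trans C) :=
    (Path.Homotopic.symm ⟨Path.Homotopy.transAssoc B B.symm C⟩)
  have s3 : (B.trans B.symm).Homotopic (Path.refl p) :=
    (Path.Homotopic.symm ⟨Path.Homotopy.reflTransSymm B⟩)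
  have s4 : ((Path.refl p).trans C).Homotopic C := ⟨Path.Homotopy.reflTrans C⟩
  refine s1.trans (((Path.Homotopic.refl A).hcomp
    (s2.trans ((s3.hcomp (Path.Homotopic.refl C)).trans s4))))

/-- Membership of a concatenated path. -/
lemma trans_mem {u : Set X} {a b c : u} (P : Path a b) (Q : Path b c) {T : Set X}
    (hP : ∀ t, (P t : X) ∈ T) (hQ : ∀ t, (Q t : X) ∈ T) (t : I) :
    ((P.trans Q) t : X) ∈ T := by
  rw [Path.trans_apply]
  split_ifs <;> [exact hP _; exact hQ _]

end Halves

section Main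

variable {V : Type*} [NormedAddCommGroup V] [NormedSpace ℂ V] [FiniteDimensional ℂ V]

lemma properW (k : ℕ) (Z : Fin k → Submodule ℂ V)
    (hcodim : ∀ i, 2 ≤ Module.finrank ℂ V - Module.finrank ℂ (Z i))
    (i : Fin k) (a b : V) :
    (Z i).restrictScalars ℝ ⊔ Submodule.span ℝ {a, b} ≠ ⊤ := by
  haveI : FiniteDimensional ℝ V := Module.Finite.trans ℂ V
  intro htop
  have hle : Module.finrank ℂ (Z i) ≤ Module.finrank ℂ V := Submodule.finrank_le _
  have hcd := hcodim i
  have hVr : Module.finrank ℝ V = 2 * Module.finrank ℂ V := by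
    rw [← Module.finrank_mul_finrank ℝ ℂ V, Complex.finrank_real_complex]
  have hZr : Module.finrank ℝ ((Z i).restrictScalars ℝ) = 2 * Module.finrank ℂ (Z i) := by
    rw [((Submodule.restrictScalarsEquiv ℝ ℂ V (Z i)).restrictScalars ℝ).finrank_eq,
      ← Module.finrank_mul_finrank ℝ ℂ (Z i), Complex.finrank_real_complex]
  have hpair : Module.finrank ℝ (Submodule.span ℝ ({a, b} : Set V)) ≤ 2 := by
    classical
    refine (finrank_span_le_card _).trans ?_
    have h1 : ({a, b} : Set V).toFinset = insert a ({b} : Finset V) := by simp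
    rw [h1]
    exact (Finset.card_insert_le _ _).trans (by simp)
  have hsup2 := Submodule.finrank_sup_add_finrank_inf_eq
    ((Z i).restrictScalars ℝ) (Submodule.span ℝ ({a, b} : Set V))
  have htoprk : Module.finrank ℝ
      ↥((Z i).restrictScalars ℝ ⊔ Submodule.span ℝ ({a, b} : Set V)) = Module.finrank ℝ V := by
    rw [htop]
    exact finrank_top ℝ V
  omega

lemma key (k : ℕ) (Z : Fin k → Submodule ℂ V)
    (hcodim : ∀ i, 2 ≤ Module.finrank ℂ V - Module.finrank ℂ (Z i))
    (U : Set V) (hU : ∀ v : V, v ∈ U ↔ ∀ i, v ∉ (Z i : Set V)) :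
    ∀ (m : ℕ) (x y : U) (γ : Path x y),
      (∀ a b : I, (b : ℝ) - (a : ℝ) ≤ (1/2 : ℝ) ^ m →
        ∃ C : Set V, Convex ℝ C ∧ C ⊆ U ∧
          ∀ s : I, (a : ℝ) ≤ (s : ℝ) → (s : ℝ) ≤ (b : ℝ) → (γ s : V) ∈ C) →
      ∃ 𝒲 : Finset (Submodule ℝ V),
        (∀ W ∈ 𝒲, W ≠ ⊤) ∧
        (∀ i, ∃ W ∈ 𝒲, (Z i).restrictScalars ℝ ≤ W) ∧
        ∀ p : V, (∀ W ∈ 𝒲, p ∉ W) →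
          ∃ (hp : p ∈ U) (h1 : segment ℝ (x : V) p ⊆ U) (h2 : segment ℝ p (y : V) ⊆ U),
            γ.Homotopic ((mySeg x ⟨p, hp⟩ h1).trans (mySeg ⟨p, hp⟩ y h2)) := by
  intro m
  induction m with
  | zero =>
    intro x y γ hQ
    classical
    obtain ⟨C, hCconv, hCU, hCmem⟩ := hQ 0 1 (by norm_num)
    have hmem : ∀ s : I, (γ s : V) ∈ C := fun s => hCmem s s.2.1 s.2.2
    have hx : (x : V) ∈ C := by have := hmem 0; rwa [γ.source] at this
    have hy : (y : V) ∈ C := by have := hmem 1; rwa [γ.target] at this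
    refine ⟨(Finset.univ : Finset (Fin k)).image
      (fun i => (Z i).restrictScalars ℝ ⊔ Submodule.span ℝ {(x : V), (y : V)}), ?_, ?_, ?_⟩
    · intro W hW
      obtain ⟨i, _, rfl⟩ := Finset.mem_image.1 hW
      exact properW k Z hcodim i _ _
    · intro i
      exact ⟨_, Finset.mem_image_of_mem _ (Finset.mem_univ i), le_sup_left⟩
    · intro p hpav
      have hpW : ∀ i, p ∉ (Z i).restrictScalars ℝ ⊔ Submodule.span ℝ {(x : V), (y : V)} :=
        fun i => hpav _ (Finset.mem_image_of_mem _ (Finset.mem_univ i))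
      have hpU : p ∈ U := (hU p).2 fun i hpz =>
        hpW i ((le_sup_left : (Z i).restrictScalars ℝ ≤ _) (by simpa using hpz))
      have hsegxyC : segment ℝ (x : V) (y : V) ⊆ C := hCconv.segment_subset hx hy
      have hTU : convexHull ℝ {(x : V), (y : V), p} ⊆ U := by
        intro q hqT
        rw [hU]
        intro i hqZ
        have hseg : q ∈ segment ℝ (x : V) (y : V) := by
          refine hull_avoid (le_sup_left : (Z i).restrictScalars ℝ ≤ _)
            ((le_sup_right : Submodule.span ℝ {(x : V), (y : V)} ≤ _)
              (Submodule.mem_span_pair.2 ⟨1, 0, by simp⟩))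
            ((le_sup_right : Submodule.span ℝ {(x : V), (y : V)} ≤ _)
              (Submodule.mem_span_pair.2 ⟨0, 1, by simp⟩))
            (hpW i) hqT (by simpa using hqZ)
        exact ((hU q).1 (hCU (hsegxyC hseg)) i) hqZ
      have hxT : (x : V) ∈ convexHull ℝ {(x : V), (y : V), p} :=
        subset_convexHull ℝ _ (by simp)
      have hyT : (y : V) ∈ convexHull ℝ {(x : V), (y : V), p} :=
        subset_convexHull ℝ _ (by simp)
      have hpT : p ∈ convexHull ℝ {(x : V), (y : V), p} :=
        subset_convexHull ℝ _ (by simp)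
      have hseg1 : segment ℝ (x : V) p ⊆ convexHull ℝ {(x : V), (y : V), p} :=
        (convex_convexHull ℝ _).segment_subset hxT hpT
      have hseg2 : segment ℝ p (y : V) ⊆ convexHull ℝ {(x : V), (y : V), p} :=
        (convex_convexHull ℝ _).segment_subset hpT hyT
      have hsegT : segment ℝ (x : V) (y : V) ⊆ convexHull ℝ {(x : V), (y : V), p} :=
        (convex_convexHull ℝ _).segment_subset hxT hyT
      have hsegxyU : segment ℝ (x : V) (y : V) ⊆ U := fun q hq => hCU (hsegxyC hq)
      refine ⟨hpU, hseg1.trans hTU, hseg2.trans hTU, ?_⟩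
      have H1 : γ.Homotopic (mySeg x y hsegxyU) :=
        convex_homotopic hCconv hCU _ _ hmem (fun t => hsegxyC (mySeg_mem_segment _ _ _ t))
      have H2 : (mySeg x y hsegxyU).Homotopic
          ((mySeg x ⟨p, hpU⟩ (hseg1.trans hTU)).trans (mySeg ⟨p, hpU⟩ y (hseg2.trans hTU))) :=
        convex_homotopic (convex_convexHull ℝ _) hTU _ _
          (fun t => hsegT (mySeg_mem_segment _ _ _ t))
          (trans_mem _ _ (fun t => hseg1 (mySeg_mem_segment x ⟨p, hpU⟩ (hseg1.trans hTU) t))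
            (fun t => hseg2 (mySeg_mem_segment ⟨p, hpU⟩ y (hseg2.trans hTU) t)))
      exact H1.trans H2
  | succ m IH =>
    intro x y γ hQ
    classical
    have hQ1 : ∀ a b : I, (b : ℝ) - (a : ℝ) ≤ (1/2 : ℝ) ^ m →
        ∃ C : Set V, Convex ℝ C ∧ C ⊆ U ∧
          ∀ s : I, (a : ℝ) ≤ (s : ℝ) → (s : ℝ) ≤ (b : ℝ) → ((fstHalf γ) s : V) ∈ C := by
      intro a b hab
      obtain ⟨C, h1, h2, h3⟩ := hQ ⟨(a : ℝ)/2, by constructor <;> [linarith [a.2.1]; linarith [a.2.2]]⟩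
        ⟨(b : ℝ)/2, by constructor <;> [linarith [b.2.1]; linarith [b.2.2]]⟩
        (by show (b : ℝ)/2 - (a : ℝ)/2 ≤ _; rw [pow_succ]; linarith)
      refine ⟨C, h1, h2, fun s hsa hsb => ?_⟩
      exact h3 ⟨(s : ℝ)/2, by constructor <;> [linarith [s.2.1]; linarith [s.2.2]]⟩
        (by show (a : ℝ)/2 ≤ (s : ℝ)/2; linarith) (by show (s : ℝ)/2 ≤ (b : ℝ)/2; linarith)
    have hQ2 : ∀ a b : I, (b : ℝ) - (a : ℝ) ≤ (1/2 : ℝ) ^ m →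
        ∃ C : Set V, Convex ℝ C ∧ C ⊆ U ∧
          ∀ s : I, (a : ℝ) ≤ (s : ℝ) → (s : ℝ) ≤ (b : ℝ) → ((sndHalf γ) s : V) ∈ C := by
      intro a b hab
      obtain ⟨C, h1, h2, h3⟩ := hQ
        ⟨((a : ℝ) + 1)/2, by constructor <;> [linarith [a.2.1]; linarith [a.2.2]]⟩
        ⟨((b : ℝ) + 1)/2, by constructor <;> [linarith [b.2.1]; linarith [b.2.2]]⟩
        (by show ((b : ℝ) + 1)/2 - ((a : ℝ) + 1)/2 ≤ _; rw [pow_succ]; linarith)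
      refine ⟨C, h1, h2, fun s hsa hsb => ?_⟩
      exact h3 ⟨((s : ℝ) + 1)/2, by constructor <;> [linarith [s.2.1]; linarith [s.2.2]]⟩
        (by show ((a : ℝ) + 1)/2 ≤ ((s : ℝ) + 1)/2; linarith)
        (by show ((s : ℝ) + 1)/2 ≤ ((b : ℝ) + 1)/2; linarith)
    obtain ⟨𝒲₁, hprop₁, hcov₁, hmain₁⟩ := IH x (γ IMid) (fstHalf γ) hQ1
    obtain ⟨𝒲₂, hprop₂, hcov₂, hmain₂⟩ := IH (γ IMid) y (sndHalf γ) hQ2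
    refine ⟨𝒲₁ ∪ 𝒲₂, ?_, ?_, ?_⟩
    · intro W hW
      rcases Finset.mem_union.1 hW with h | h
      · exact hprop₁ W h
      · exact hprop₂ W h
    · intro i
      obtain ⟨W, hW, hle⟩ := hcov₁ i
      exact ⟨W, Finset.mem_union_left _ hW, hle⟩
    · intro p hp
      obtain ⟨hpU, hxp, hpz, H₁⟩ := hmain₁ p (fun W hW => hp W (Finset.mem_union_left _ hW))
      obtain ⟨hpU', hzp, hpy, H₂⟩ := hmain₂ p (fun W hW => hp W (Finset.mem_union_right _ hW))
      refine ⟨hpU, hxp, hpy, ?_⟩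
      have hB : (mySeg (⟨p, hpU⟩ : U) (γ IMid) hpz).symm = mySeg (γ IMid) ⟨p, hpU⟩ hzp :=
        mySeg_symm _ _ _ _
      have H12 := H₁.hcomp H₂
      rw [halves_eq γ] at H12
      rw [← hB] at H12
      exact H12.trans (cancel_middle _ _ _)

end Main

section Final

variable {V : Type*} [NormedAddCommGroup V] [NormedSpace ℂ V] [FiniteDimensional ℂ V]

lemma exists_m {U : Set V} (hUo : IsOpen U) {x y : U} (γ : Path x y) :
    ∃ m : ℕ, ∀ a b : I, (b : ℝ) - (a : ℝ) ≤ (1/2 : ℝ) ^ m →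
      ∃ C : Set V, Convex ℝ C ∧ C ⊆ U ∧
        ∀ s : I, (a : ℝ) ≤ (s : ℝ) → (s : ℝ) ≤ (b : ℝ) → (γ s : V) ∈ C := by
  set g : I → V := fun s => (γ s : V) with hg
  have hgc : Continuous g := continuous_subtype_val.comp γ.continuous
  have hrange : range g ⊆ U := by rintro _ ⟨s, rfl⟩; exact (γ s).2
  obtain ⟨ε, hε, hthick⟩ := (isCompact_range hgc).exists_thickening_subset_open hUo hrange
  obtain ⟨δ, hδ, hd⟩ := Metric.uniformContinuous_iff.1
    (CompactSpace.uniformContinuous_of_continuous hgc) ε hε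
  obtain ⟨m, hm⟩ := exists_pow_lt_of_lt_one hδ (by norm_num : (1/2 : ℝ) < 1)
  refine ⟨m, fun a b hab => ⟨Metric.ball (g a) ε, convex_ball _ _, ?_, fun s hsa hsb => ?_⟩⟩
  · refine Subset.trans ?_ hthick
    intro q hq
    rw [Metric.mem_thickening_iff]
    exact ⟨g a, mem_range_self a, hq⟩
  · rw [Metric.mem_ball]
    apply hd
    rw [Subtype.dist_eq, Real.dist_eq, abs_of_nonneg (by linarith : (0:ℝ) ≤ (s:ℝ) - (a:ℝ))]
    linarith

lemma seg_avoid {Z W : Submodule ℝ V} (hZW : Z ≤ W) {a p : V}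
    (haZ : a ∉ Z) (haW : a ∈ W) (hpW : p ∉ W) : ∀ q ∈ segment ℝ a p, q ∉ Z := by
  rintro q ⟨α, τ, hα, hτ, hατ, rfl⟩ hqZ
  rcases eq_or_lt_of_le hτ with h0 | h0
  · have hα1 : α = 1 := by linarith
    subst hα1
    apply haZ
    simpa [← h0] using hqZ
  · apply hpW
    have hpe : p = τ⁻¹ • ((α • a + τ • p) - α • a) := by
      rw [add_sub_cancel_left, inv_smul_smul₀ (ne_of_gt h0)]
    rw [hpe]
    exact W.smul_mem _ (W.sub_mem (hZW hqZ) (W.smul_mem _ haW))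

end Final

/-- The complement of a finite union of complex linear subspaces of complex
codimension at least `2` in a finite-dimensional complex vector space is
simply connected (in particular path-connected). -/
theorem complement_of_small_subspaces_simplyConnected
    {V : Type*} [NormedAddCommGroup V] [NormedSpace ℂ V] [FiniteDimensional ℂ V]
    (k : ℕ) (Z : Fin k → Submodule ℂ V)
    (hcodim : ∀ i, 2 ≤ Module.finrank ℂ V - Module.finrank ℂ (Z i)) :
    SimplyConnectedSpace ((⋃ i, ((Z i : Set V)))ᶜ : Set V) := by
  classical
  haveI : FiniteDimensional ℝ V := Module.Finite.trans ℂ V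
  set U : Set V := (⋃ i, ((Z i : Set V)))ᶜ with hUdef
  have hU : ∀ v : V, v ∈ U ↔ ∀ i, v ∉ (Z i : Set V) := by
    intro v
    simp [hUdef, Set.mem_compl_iff, Set.mem_iUnion]
  have hUo : IsOpen U := by
    rw [hUdef, isOpen_compl_iff]
    exact isClosed_iUnion_of_finite fun i => (Z i).closed_of_finiteDimensional
  rw [simply_connected_iff_unique_homotopic]
  constructor
  · have hprop : ∀ W ∈ (Finset.univ : Finset (Fin k)).image
        (fun i => (Z i).restrictScalars ℝ ⊔ Submodule.span ℝ {(0 : V), (0 : V)}), W ≠ ⊤ := by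
      intro W hW
      obtain ⟨i, _, rfl⟩ := Finset.mem_image.1 hW
      exact properW k Z hcodim i 0 0
    obtain ⟨p, hp⟩ := exists_avoid _ hprop
    refine ⟨⟨p, (hU p).2 fun i hpZ => ?_⟩⟩
    refine hp _ (Finset.mem_image_of_mem _ (Finset.mem_univ i))
      ((le_sup_left : (Z i).restrictScalars ℝ ≤ _) (by simpa using hpZ))
  · intro x y
    -- all homotopy classes of paths from x to y coincide
    have hsub : ∀ P Q : Path.Homotopic.Quotient x y, P = Q := by
      intro P Q
      refine Quotient.inductionOn₂ P Q (fun γ₁ γ₂ => ?_)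
      obtain ⟨m₁, hQ₁⟩ := exists_m hUo γ₁
      obtain ⟨m₂, hQ₂⟩ := exists_m hUo γ₂
      have hmono : ∀ {n n' : ℕ}, n ≤ n' → ((1/2 : ℝ) ^ n' ≤ (1/2) ^ n) := fun h =>
        pow_le_pow_of_le_one (by norm_num) (by norm_num) h
      obtain ⟨𝒲₁, hp₁, hc₁, hm₁⟩ := key k Z hcodim U hU (max m₁ m₂) x y γ₁
        (fun a b hab => hQ₁ a b (hab.trans (hmono (le_max_left _ _))))
      obtain ⟨𝒲₂, hp₂, hc₂, hm₂⟩ := key k Z hcodim U hU (max m₁ m₂) x y γ₂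
        (fun a b hab => hQ₂ a b (hab.trans (hmono (le_max_right _ _))))
      obtain ⟨p, hp⟩ := exists_avoid (𝒲₁ ∪ 𝒲₂) (by
        intro W hW
        rcases Finset.mem_union.1 hW with h | h
        · exact hp₁ W h
        · exact hp₂ W h)
      obtain ⟨hpU, h1, h2, H₁⟩ := hm₁ p (fun W hW => hp W (Finset.mem_union_left _ hW))
      obtain ⟨hpU2, h12, h22, H₂⟩ := hm₂ p (fun W hW => hp W (Finset.mem_union_right _ hW))
      exact Quotient.sound (H₁.trans H₂.symm)
    -- existence of some path from x to y
    have hxU : ∀ i, (x : V) ∉ ((Z i).restrictScalars ℝ : Submodule ℝ V) := by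
      intro i hxi
      exact ((hU (x : V)).1 x.2 i) (by simpa using hxi)
    have hyU : ∀ i, (y : V) ∉ ((Z i).restrictScalars ℝ : Submodule ℝ V) := by
      intro i hyi
      exact ((hU (y : V)).1 y.2 i) (by simpa using hyi)
    obtain ⟨p, hp⟩ := exists_avoid
      (((Finset.univ : Finset (Fin k)).image
        (fun i => (Z i).restrictScalars ℝ ⊔ Submodule.span ℝ {(x : V), (x : V)})) ∪
       ((Finset.univ : Finset (Fin k)).image
        (fun i => (Z i).restrictScalars ℝ ⊔ Submodule.span ℝ {(y : V), (y : V)})))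
      (by
        intro W hW
        rcases Finset.mem_union.1 hW with h | h <;>
          · obtain ⟨i, _, rfl⟩ := Finset.mem_image.1 h
            exact properW k Z hcodim i _ _)
    have hpx : ∀ i, p ∉ (Z i).restrictScalars ℝ ⊔ Submodule.span ℝ {(x : V), (x : V)} :=
      fun i => hp _ (Finset.mem_union_left _ (Finset.mem_image_of_mem _ (Finset.mem_univ i)))
    have hpy : ∀ i, p ∉ (Z i).restrictScalars ℝ ⊔ Submodule.span ℝ {(y : V), (y : V)} :=
      fun i => hp _ (Finset.mem_union_right _ (Finset.mem_image_of_mem _ (Finset.mem_univ i)))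
    have hpU : p ∈ U := (hU p).2 fun i hpz =>
      hpx i ((le_sup_left : (Z i).restrictScalars ℝ ≤ _) (by simpa using hpz))
    have h1 : segment ℝ (x : V) p ⊆ U := by
      intro q hq
      refine (hU q).2 fun i hqZ => ?_
      refine seg_avoid (le_sup_left : (Z i).restrictScalars ℝ ≤ _) (hxU i)
        ((le_sup_right : Submodule.span ℝ {(x : V), (x : V)} ≤ _)
          (Submodule.mem_span_pair.2 ⟨1, 0, by simp⟩)) (hpx i) q hq (by simpa using hqZ)
    have h2 : segment ℝ p (y : V) ⊆ U := by
      intro q hq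
      rw [segment_symm] at hq
      refine (hU q).2 fun i hqZ => ?_
      refine seg_avoid (le_sup_left : (Z i).restrictScalars ℝ ≤ _) (hyU i)
        ((le_sup_right : Submodule.span ℝ {(y : V), (y : V)} ≤ _)
          (Submodule.mem_span_pair.2 ⟨1, 0, by simp⟩)) (hpy i) q hq (by simpa using hqZ)
    refine ⟨⟨⟨⟦(mySeg x ⟨p, hpU⟩ h1).trans (mySeg ⟨p, hpU⟩ y h2)⟧⟩, fun q => ?_⟩⟩
    exact hsub q ⟦(mySeg x ⟨p, hpU⟩ h1).trans (mySeg ⟨p, hpU⟩ y h2)⟧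
end

section
/- Let V be a finite-dimensional complex vector space with its standard topology, G ⊆ GL(V) a finite subgroup, and Y ⊆ V a G-invariant open subset that is simply connected. Then there exists a surjective group homomorphism from G onto the fundamental group of the orbit space Y/G (based at any point). -/
open scoped unitInterval
open Set CategoryTheory

attribute [local instance] Path.Homotopic.setoid

private lemma path_cast_rfl_rfl {X : Type*} [TopologicalSpace X] {x y : X} (p : Path x y) :
    p.cast rfl rfl = p := by
  ext t
  exact congrFun (p.cast_coe rfl rfl) t

private lemma cast_homotopic {X : Type*} [TopologicalSpace X] {x y x' y' : X}
    (hx : x' = x) (hy : y' = y) {p q : Path x y} (h : p.Homotopic q) :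
    (p.cast hx hy).Homotopic (q.cast hx hy) := by
  subst hx; subst hy
  rwa [path_cast_rfl_rfl, path_cast_rfl_rfl]

private lemma subspace_paths_homotopic {X : Type*} [TopologicalSpace X] {U : Set X}
    (hU : SimplyConnectedSpace U) {u v : X} (p q : Path u v)
    (h₁ : Set.range p ⊆ U) (h₂ : Set.range q ⊆ U) : p.Homotopic q := by
  have hu : u ∈ U := by have := h₁ (Set.mem_range_self 0); rwa [p.source] at this
  have hv : v ∈ U := by have := h₁ (Set.mem_range_self 1); rwa [p.target] at this
  let L : ∀ (r : Path u v), Set.range r ⊆ U → Path (⟨u, hu⟩ : U) ⟨v, hv⟩ := fun r hr =>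
    { toFun := fun s => ⟨r s, hr (Set.mem_range_self s)⟩
      continuous_toFun := r.continuous.subtype_mk _
      source' := Subtype.ext r.source
      target' := Subtype.ext r.target }
  haveI := hU
  have h := SimplyConnectedSpace.paths_homotopic (L p h₁) (L q h₂)
  have h' := h.map ⟨Subtype.val, continuous_subtype_val⟩
  have e : ∀ (r : Path u v) (hr : Set.range r ⊆ U),
      (L r hr).map continuous_subtype_val = r := by
    intro r hr; ext t; rfl
  rwa [e p h₁, e q h₂] at h'

private lemma contractible_of_quot {Z W : Type*} [TopologicalSpace Z] [TopologicalSpace W]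
    [Nonempty Z] {f : Z → W} (hf : IsOpenQuotientMap f) (K : I × Z → W) (hK : Continuous K)
    (hfib : ∀ (s : I) (z z' : Z), f z = f z' → K (s, z) = K (s, z')) (w₀ : W)
    (h0 : ∀ z, K (0, z) = w₀) (h1 : ∀ z, K (1, z) = f z) : ContractibleSpace W := by
  rw [contractible_iff_id_nullhomotopic]
  refine ⟨w₀, ?_⟩
  have hsec : ∀ w, f (Function.surjInv hf.surjective w) = w :=
    Function.surjInv_eq hf.surjective
  have hQM : Topology.IsQuotientMap (Prod.map (id : I → I) f) :=
    (IsOpenQuotientMap.id.prodMap hf).isQuotientMap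
  have hcont : Continuous fun sw : I × W => K (sw.1, Function.surjInv hf.surjective sw.2) := by
    rw [hQM.continuous_iff]
    have : ((fun sw : I × W => K (sw.1, Function.surjInv hf.surjective sw.2)) ∘
        (Prod.map (id : I → I) f)) = K := by
      funext sz
      exact hfib _ _ _ (hsec (f sz.2))
    rw [this]; exact hK
  refine ⟨(ContinuousMap.Homotopy.symm ?_)⟩
  exact
    { toFun := fun sw => K (sw.1, Function.surjInv hf.surjective sw.2)
      continuous_toFun := hcont
      map_zero_left := fun w => h0 _
      map_one_left := fun w => (h1 _).trans (hsec w) }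

private lemma trunc_decomp {X : Type*} [TopologicalSpace X] {a b : X} (γ : Path a b)
    {t₀ t₁ : ℝ} (h0 : 0 ≤ t₀) (h01 : t₀ ≤ t₁) (h11 : t₁ ≤ 1) :
    ((γ.truncate t₀ 1).cast (by rw [min_eq_left (h01.trans h11)]) rfl).Homotopic
      (((γ.truncate t₀ t₁).cast (by rw [min_eq_left h01]) rfl).trans
        ((γ.truncate t₁ 1).cast (by rw [min_eq_left h11]) rfl)) := by
  have ht₁0 : (0:ℝ) ≤ t₁ := h0.trans h01
  set p : Path (γ.extend t₀) (γ.extend 1) :=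
    (γ.truncate t₀ 1).cast (by rw [min_eq_left (h01.trans h11)]) rfl with hp
  have hFb : ∀ u : ℝ, 0 ≤ u → u ≤ 1 →
      0 ≤ (if u ≤ 1/2 then min (2*u) t₁ else max (2*u-1) t₁) ∧
      (if u ≤ 1/2 then min (2*u) t₁ else max (2*u-1) t₁) ≤ 1 := by
    intro u hu0 hu1
    split_ifs with h
    · exact ⟨le_min (by linarith) ht₁0, (min_le_right _ _).trans h11⟩
    · exact ⟨ht₁0.trans (le_max_right _ _), max_le (by linarith) h11⟩
  have hFc : Continuous fun u : ℝ => if u ≤ 1/2 then min (2*u) t₁ else max (2*u-1) t₁ := by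
    apply Continuous.if_le
    · exact (continuous_const.mul continuous_id).min continuous_const
    · exact ((continuous_const.mul continuous_id).sub continuous_const).max continuous_const
    · exact continuous_id
    · exact continuous_const
    · intro u hu; subst hu; norm_num [min_eq_right h11, max_eq_right ht₁0]
  let f : I → I := fun s => ⟨if (s:ℝ) ≤ 1/2 then min (2*(s:ℝ)) t₁ else max (2*(s:ℝ)-1) t₁,
    (hFb s s.2.1 s.2.2).1, (hFb s s.2.1 s.2.2).2⟩
  have hf : Continuous f := (hFc.comp continuous_subtype_val).subtype_mk _
  have hf0 : f 0 = 0 := by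
    simp only [f]
    apply Subtype.ext
    norm_num [min_eq_left ht₁0]
  have hf1 : f 1 = 1 := by
    simp only [f]
    apply Subtype.ext
    norm_num [max_eq_left h11]
  have key : p.reparam f hf hf0 hf1 =
      ((γ.truncate t₀ t₁).cast (by rw [min_eq_left h01]) rfl).trans
        ((γ.truncate t₁ 1).cast (by rw [min_eq_left h11]) rfl) := by
    ext s
    rw [Path.trans_apply]
    simp only [Path.coe_reparam, Function.comp_apply, Path.cast_coe, hp]
    split_ifs with hs
    · show (γ.truncate t₀ 1) (f s) = (γ.truncate t₀ t₁) _
      show γ.extend (min (max ((f s : ℝ)) t₀) 1) = γ.extend (min (max (2*(s:ℝ)) t₀) t₁)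
      congr 1
      show min (max (if (s:ℝ) ≤ 1/2 then min (2*(s:ℝ)) t₁ else max (2*(s:ℝ)-1) t₁) t₀) 1
          = min (max (2*(s:ℝ)) t₀) t₁
      rw [if_pos hs]
      simp only [min_def, max_def]
      split_ifs <;> linarith
    · show (γ.truncate t₀ 1) (f s) = (γ.truncate t₁ 1) _
      show γ.extend (min (max ((f s : ℝ)) t₀) 1) = γ.extend (min (max (2*(s:ℝ)-1) t₁) 1)
      congr 1
      show min (max (if (s:ℝ) ≤ 1/2 then min (2*(s:ℝ)) t₁ else max (2*(s:ℝ)-1) t₁) t₀) 1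
          = min (max (2*(s:ℝ)-1) t₁) 1
      rw [if_neg hs]
      simp only [min_def, max_def]
      split_ifs <;> linarith
  have h := Nonempty.intro (Path.Homotopy.reparam p f hf hf0 hf1)
  rw [key] at h
  exact h


/-- If `Y ⊆ V` is a `G`-invariant open simply connected subset, then for any
basepoint there is a surjective group homomorphism from the finite group `G`
onto the fundamental group of the orbit space `Y/G`. -/
theorem surjection_onto_fundamentalGroup_of_orbitSpace
    {V : Type*} [NormedAddCommGroup V] [NormedSpace ℂ V] [FiniteDimensional ℂ V]
    (G : Subgroup (V ≃ₗ[ℂ] V)) (hGfin : Finite G)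
    (Y : Set V) (hopen : IsOpen Y)
    (hinv : ∀ g ∈ G, ∀ y ∈ Y, g y ∈ Y)
    (hsc : SimplyConnectedSpace Y) :
    ∀ x : Quot (fun a b : Y => ∃ g ∈ G, g a.1 = b.1),
      ∃ φ : G →* FundamentalGroup (Quot (fun a b : Y => ∃ g ∈ G, g a.1 = b.1)) x,
        Function.Surjective φ := by
  classical
  intro x
  haveI := hsc
  letI : Fintype ↥G := Fintype.ofFinite _
  -- the action on Y
  let A : ↥G → ↥Y → ↥Y := fun g z => ⟨g.1 z.1, hinv g.1 g.2 z.1 z.2⟩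
  have hAcont : ∀ g, Continuous (A g) := by
    intro g
    have : Continuous fun v : V => g.1 v := LinearMap.continuous_of_finiteDimensional g.1.toLinearMap
    exact (this.comp continuous_subtype_val).subtype_mk _
  have hAmul : ∀ g h z, A (g * h) z = A g (A h z) := fun _ _ _ => rfl
  have hAone : ∀ z, A 1 z = z := fun _ => rfl
  have hAinv : ∀ g z, A g⁻¹ (A g z) = z := by
    intro g z
    rw [← hAmul, inv_mul_cancel, hAone]
  -- the quotient map
  let p : ↥Y → Quot (fun a b : ↥Y => ∃ g ∈ G, g a.1 = b.1) := Quot.mk _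
  have hpcont : Continuous p := continuous_quot_mk
  have hpsurj : Function.Surjective p := Quot.exists_rep
  have hApq : ∀ g z, p (A g z) = p z := fun g z => (Quot.sound ⟨g.1, g.2, rfl⟩).symm
  have hequiv : Equivalence (fun a b : ↥Y => ∃ g ∈ G, g a.1 = b.1) := by
    constructor
    · exact fun a => ⟨1, one_mem _, rfl⟩
    · rintro a b ⟨g, hg, hab⟩
      exact ⟨g⁻¹, inv_mem hg, by rw [← hab]; exact (LinearEquiv.symm_apply_apply g a.1 :)⟩
    · rintro a b c ⟨g, hg, hab⟩ ⟨h, hh, hbc⟩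
      exact ⟨h * g, mul_mem hh hg, by rw [← hbc, ← hab]; rfl⟩
  have hpeq : ∀ {a b : ↥Y}, p a = p b → ∃ g : ↥G, A g a = b := by
    intro a b hab
    obtain ⟨g, hg, h⟩ := hequiv.eqvGen_iff.mp (Quot.eqvGen_exact hab)
    exact ⟨⟨g, hg⟩, Subtype.ext h⟩
  have hpopen : IsOpenMap p := by
    intro S hS
    have hq : Topology.IsQuotientMap p := isQuotientMap_quot_mk
    rw [← hq.isOpen_preimage]
    have : p ⁻¹' (p '' S) = ⋃ g : ↥G, A g '' S := by
      ext z
      constructor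
      · rintro ⟨z', hz', hz⟩
        obtain ⟨g, hg⟩ := hpeq hz
        exact Set.mem_iUnion.mpr ⟨g, z', hz', hg⟩
      · rintro hz
        obtain ⟨g, z', hz', hgz⟩ := Set.mem_iUnion.mp hz
        exact ⟨z', hz', by rw [← hgz]; exact (hApq g z').symm⟩
    rw [this]
    refine isOpen_iUnion fun g => ?_
    have : A g '' S = A g⁻¹ ⁻¹' S := by
      ext z
      constructor
      · rintro ⟨z', hz', rfl⟩; simpa [hAinv] using hz'
      · intro hz
        exact ⟨A g⁻¹ z, hz, by rw [← hAmul, mul_inv_cancel, hAone]⟩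
    rw [this]
    exact hS.preimage (hAcont g⁻¹)
  -- invariant norm
  let N : V → ℝ := fun v => ∑ g : ↥G, ‖g.1 v‖
  have hNcont : Continuous N :=
    continuous_finset_sum _ fun g _ =>
      (LinearMap.continuous_of_finiteDimensional g.1.toLinearMap).norm
  have hNnonneg : ∀ v, 0 ≤ N v := fun v => Finset.sum_nonneg fun g _ => norm_nonneg _
  have hNinv : ∀ (g : ↥G) (v : V), N (g.1 v) = N v := by
    intro g v
    calc N (g.1 v) = ∑ h : ↥G, ‖(h * g).1 v‖ := Finset.sum_congr rfl fun h _ => rfl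
    _ = N v := Equiv.sum_comp (Equiv.mulRight g) fun h => ‖h.1 v‖
  have hNzero : N 0 = 0 := by simp [N]
  have hNge : ∀ v, ‖v‖ ≤ N v := by
    intro v
    have := Finset.single_le_sum (f := fun g : ↥G => ‖g.1 v‖)
      (fun i _ => norm_nonneg _) (Finset.mem_univ (1 : ↥G))
    simpa [N] using this
  have hNadd : ∀ u v, N (u + v) ≤ N u + N v := by
    intro u v
    rw [← Finset.sum_add_distrib]
    exact Finset.sum_le_sum fun g _ => by
      rw [map_add]; exact norm_add_le _ _
  have hNsmul : ∀ (t : ℝ) (v : V), N ((t : ℂ) • v) = |t| * N v := by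
    intro t v
    rw [Finset.mul_sum]
    refine Finset.sum_congr rfl fun g _ => ?_
    rw [map_smul, norm_smul, Complex.norm_real, Real.norm_eq_abs]
  have hNneg : ∀ v, N (-v) = N v := by
    intro v
    refine Finset.sum_congr rfl fun g _ => ?_
    rw [map_neg, norm_neg]
  -- choice of radii
  have hrad : ∀ z : ↥Y, ∃ r : ℝ, 0 < r ∧ (∀ v : V, N (v - z.1) < r → v ∈ Y) ∧
      (∀ (g : ↥G) (b b' : V), N (b - z.1) < r → N (b' - z.1) < r → g.1 b = b' →
        g.1 z.1 = z.1) := by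
    intro z
    obtain ⟨ε, hε, hball⟩ := Metric.isOpen_iff.mp hopen z.1 z.2
    set T : Finset ↥G := Finset.univ.filter (fun g : ↥G => g.1 z.1 ≠ z.1) with hT
    by_cases hTne : T.Nonempty
    · set m : ℝ := T.inf' hTne (fun g => N (g.1 z.1 - z.1)) with hm
      have hmpos : 0 < m := by
        rw [hm, Finset.lt_inf'_iff]
        intro g hg
        have hne : g.1 z.1 - z.1 ≠ 0 := sub_ne_zero.mpr (by
          simpa [hT, Finset.mem_filter] using hg)
        calc (0:ℝ) < ‖g.1 z.1 - z.1‖ := norm_pos_iff.mpr hne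
        _ ≤ N (g.1 z.1 - z.1) := hNge _
      refine ⟨min ε (m / 2), lt_min hε (by linarith), fun v hv => ?_, ?_⟩
      · apply hball
        rw [Metric.mem_ball, dist_eq_norm]
        exact lt_of_le_of_lt (hNge _) (lt_of_lt_of_le hv (min_le_left _ _))
      · intro g b b' hb hb' hgb
        by_contra hgz
        have hgT : g ∈ T := by simp [hT, Finset.mem_filter, hgz]
        have h1 : m ≤ N (g.1 z.1 - z.1) := Finset.inf'_le _ hgT
        have h2 : g.1 z.1 - z.1 = (g.1 z.1 - g.1 b) + (b' - z.1) := by rw [hgb]; abel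
        have h3 : N (g.1 z.1 - g.1 b) = N (b - z.1) := by
          rw [← map_sub, hNinv, ← hNneg, neg_sub]
        have h4 : N (g.1 z.1 - z.1) < min ε (m/2) + min ε (m/2) := by
          calc N (g.1 z.1 - z.1) ≤ N (g.1 z.1 - g.1 b) + N (b' - z.1) := h2 ▸ hNadd _ _
          _ < min ε (m/2) + min ε (m/2) := by rw [h3]; exact add_lt_add hb hb'
        have := min_le_right ε (m/2)
        linarith
    · refine ⟨ε, hε, fun v hv => ?_, fun g b b' _ _ _ => ?_⟩
      · apply hball
        rw [Metric.mem_ball, dist_eq_norm]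
        exact lt_of_le_of_lt (hNge _) hv
      · by_contra hgz
        exact hTne ⟨g, by simp [hT, Finset.mem_filter, hgz]⟩
  choose rr hrpos hrY hrslice using hrad
  -- the basic charts
  let BY : ↥Y → Set ↥Y := fun z => {w : ↥Y | N (w.1 - z.1) < rr z}
  have hBYopen : ∀ z, IsOpen (BY z) := by
    intro z
    have : BY z = (fun w : ↥Y => N (w.1 - z.1)) ⁻¹' Set.Iio (rr z) := rfl
    rw [this]
    exact IsOpen.preimage (hNcont.comp (continuous_subtype_val.sub continuous_const))
      isOpen_Iio
  have hzBY : ∀ z, z ∈ BY z := by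
    intro z
    show N (z.1 - z.1) < rr z
    rw [sub_self, hNzero]
    exact hrpos z
  let UU : ↥Y → Set (Quot (fun a b : ↥Y => ∃ g ∈ G, g a.1 = b.1)) := fun z => p '' BY z
  have hUopen : ∀ z, IsOpen (UU z) := fun z => hpopen _ (hBYopen z)
  have hUz : ∀ z, p z ∈ UU z := fun z => ⟨z, hzBY z, rfl⟩
  have hslice : ∀ (z : ↥Y) (a b : ↥Y), a ∈ BY z → b ∈ BY z → p a = p b →
      ∃ g : ↥G, g.1 z.1 = z.1 ∧ A g a = b := by
    intro z a b ha hb hab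
    obtain ⟨g, hg⟩ := hpeq hab
    exact ⟨g, hrslice z g a.1 b.1 ha hb (congrArg Subtype.val hg), hg⟩
  -- scaling lemmas
  have hscalemem : ∀ (z : ↥Y) (s : I) (v : V), N (v - z.1) < rr z →
      N ((z.1 + (s : ℂ) • (v - z.1)) - z.1) < rr z := by
    intro z s v hv
    rw [add_sub_cancel_left, hNsmul, abs_of_nonneg s.2.1]
    calc (s:ℝ) * N (v - z.1) ≤ 1 * N (v - z.1) :=
      mul_le_mul_of_nonneg_right s.2.2 (hNnonneg _)
    _ < rr z := by rwa [one_mul]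
  have hconvex : ∀ (z : ↥Y) (s : I) (a b : V), N (a - z.1) < rr z → N (b - z.1) < rr z →
      N ((a + (s : ℂ) • (b - a)) - z.1) < rr z := by
    intro z s a b ha hb
    have key : (a + (s : ℂ) • (b - a)) - z.1
        = ((1 - (s:ℝ) : ℝ) : ℂ) • (a - z.1) + (s : ℂ) • (b - z.1) := by
      push_cast
      module
    rw [key]
    calc N _ ≤ N (((1 - (s:ℝ) : ℝ) : ℂ) • (a - z.1)) + N ((s : ℂ) • (b - z.1)) := hNadd _ _
    _ = (1 - (s:ℝ)) * N (a - z.1) + (s:ℝ) * N (b - z.1) := by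
        rw [hNsmul, hNsmul, abs_of_nonneg s.2.1, abs_of_nonneg (by linarith [s.2.2] : (0:ℝ) ≤ 1 - (s:ℝ))]
    _ < (1 - (s:ℝ)) * rr z + (s:ℝ) * rr z := by
        have h1 : (0:ℝ) ≤ (s:ℝ) := s.2.1
        have h2 : (s:ℝ) ≤ 1 := s.2.2
        rcases eq_or_lt_of_le h1 with h|h
        · rw [← h]; simpa using ha
        · rcases eq_or_lt_of_le h2 with h'|h'
          · rw [h']; simpa using hb
          · have := mul_lt_mul_of_pos_left ha (by linarith : (0:ℝ) < 1 - (s:ℝ))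
            have := mul_lt_mul_of_pos_left hb h
            linarith
    _ = rr z := by ring
  -- segments inside charts
  have hseg : ∀ (z a b : ↥Y), a ∈ BY z → b ∈ BY z →
      ∃ q : Path a b, ∀ s, q s ∈ BY z := by
    intro z a b ha hb
    have hmem : ∀ s : I, (a.1 + (s:ℂ) • (b.1 - a.1)) ∈ Y := fun s =>
      hrY z _ (hconvex z s a.1 b.1 ha hb)
    refine ⟨{ toFun := fun s => ⟨a.1 + (s:ℂ) • (b.1 - a.1), hmem s⟩
              continuous_toFun := ?_
              source' := ?_
              target' := ?_ }, fun s => hconvex z s a.1 b.1 ha hb⟩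
    · refine Continuous.subtype_mk ?_ _
      exact continuous_const.add
        ((Complex.continuous_ofReal.comp continuous_subtype_val).smul continuous_const)
    · apply Subtype.ext; simp
    · apply Subtype.ext; simp
  -- simply connected charts
  have hUsc : ∀ z : ↥Y, SimplyConnectedSpace ↥(UU z) := by
    intro z
    haveI : Nonempty ↥(BY z) := ⟨⟨z, hzBY z⟩⟩
    let f : ↥(BY z) → ↥(UU z) := fun b => ⟨p b.1, ⟨b.1, b.2, rfl⟩⟩
    have hfsurj : Function.Surjective f := by
      rintro ⟨w, b, hb, rfl⟩
      exact ⟨⟨b, hb⟩, rfl⟩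
    have hfcont : Continuous f := (hpcont.comp continuous_subtype_val).subtype_mk _
    have hfopen : IsOpenMap f := by
      intro S hS
      obtain ⟨S₀, hS₀, rfl⟩ := isOpen_induced_iff.mp hS
      have himg : f '' (Subtype.val ⁻¹' S₀) = Subtype.val ⁻¹' (p '' (S₀ ∩ BY z)) := by
        ext w
        constructor
        · rintro ⟨b, hb, rfl⟩
          exact ⟨b.1, ⟨hb, b.2⟩, rfl⟩
        · rintro ⟨y', ⟨hy'S, hy'B⟩, hpy⟩
          exact ⟨⟨y', hy'B⟩, hy'S, Subtype.ext hpy⟩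
      rw [himg]
      exact (hpopen _ (hS₀.inter (hBYopen z))).preimage continuous_subtype_val
    have hfq : IsOpenQuotientMap f := ⟨hfsurj, hfcont, hfopen⟩
    have hKmem : ∀ (s : I) (b : ↥(BY z)), N ((z.1 + (s:ℂ) • (b.1.1 - z.1)) - z.1) < rr z :=
      fun s b => hscalemem z s b.1.1 b.2
    let K : I × ↥(BY z) → ↥(UU z) := fun sb =>
      ⟨p ⟨z.1 + ((sb.1 : ℝ) : ℂ) • (sb.2.1.1 - z.1), hrY z _ (hKmem sb.1 sb.2)⟩,
        ⟨_, hKmem sb.1 sb.2, rfl⟩⟩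
    have hKcont : Continuous K := by
      refine Continuous.subtype_mk ?_ _
      refine hpcont.comp ?_
      refine Continuous.subtype_mk ?_ _
      exact continuous_const.add
        ((Complex.continuous_ofReal.comp (continuous_subtype_val.comp continuous_fst)).smul
          (((continuous_subtype_val.comp continuous_subtype_val).comp continuous_snd).sub
            continuous_const))
    have hKfib : ∀ (s : I) (b b' : ↥(BY z)), f b = f b' → K (s, b) = K (s, b') := by
      intro s b b' hbb
      have hpb : p b.1 = p b'.1 := congrArg Subtype.val hbb
      obtain ⟨g, hgz, hgb⟩ := hslice z b.1 b'.1 b.2 b'.2 hpb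
      apply Subtype.ext
      symm
      show p _ = p _
      have hval : (z.1 + ((s:ℝ):ℂ) • (b'.1.1 - z.1))
          = g.1 (z.1 + ((s:ℝ):ℂ) • (b.1.1 - z.1)) := by
        rw [map_add, map_smul, map_sub, hgz]
        have : g.1 b.1.1 = b'.1.1 := congrArg (fun w : ↥Y => w.1) hgb
        rw [this]
      calc p ⟨z.1 + ((s:ℝ):ℂ) • (b'.1.1 - z.1), hrY z _ (hKmem s b')⟩
          = p (A g ⟨z.1 + ((s:ℝ):ℂ) • (b.1.1 - z.1), hrY z _ (hKmem s b)⟩) :=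
            congrArg p (Subtype.ext hval)
      _ = p ⟨z.1 + ((s:ℝ):ℂ) • (b.1.1 - z.1), hrY z _ (hKmem s b)⟩ := hApq g _
    have hK0 : ∀ b, K (0, b) = ⟨p z, hUz z⟩ := by
      intro b
      apply Subtype.ext
      show p _ = p z
      apply congrArg p
      apply Subtype.ext
      show z.1 + (((0:I):ℝ):ℂ) • (b.1.1 - z.1) = z.1
      norm_num
    have hK1 : ∀ b, K (1, b) = f b := by
      intro b
      apply Subtype.ext
      show p _ = p b.1
      apply congrArg p
      apply Subtype.ext
      show z.1 + (((1:I):ℝ):ℂ) • (b.1.1 - z.1) = b.1.1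
      norm_num
    haveI : ContractibleSpace ↥(UU z) :=
      contractible_of_quot hfq K hKcont hKfib ⟨p z, hUz z⟩ hK0 hK1
    infer_instance
  -- lifting of paths up to homotopy
  have chain : ∀ (x₁ x₂ : Quot (fun a b : ↥Y => ∃ g ∈ G, g a.1 = b.1)) (α : Path x₁ x₂),
      ∃ (a b : ↥Y) (q : Path a b) (ha : p a = x₁) (hb : p b = x₂),
        ((q.map hpcont).cast ha.symm hb.symm).Homotopic α := by
    intro x₁ x₂ α
    have hcov : (Set.univ : Set I) ⊆ ⋃ z : ↥Y, (⇑α) ⁻¹' (UU z) := by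
      intro s _
      obtain ⟨w, hw⟩ := hpsurj (α s)
      exact Set.mem_iUnion.mpr ⟨w, show α s ∈ UU w by rw [← hw]; exact hUz w⟩
    obtain ⟨t, ht0, htmono, ⟨nmax, htmax⟩, htgood⟩ :=
      exists_monotone_Icc_subset_open_cover_unitInterval
        (fun z => (hUopen z).preimage α.continuous) hcov
    let P : ℕ → Prop := fun j =>
      ∃ (a b : ↥Y) (q : Path a b) (ha : p a = α.extend ↑(t j)) (hb : p b = x₂),
        ((q.map hpcont).cast ha.symm hb.symm).Homotopic
          ((α.truncate ↑(t j) 1).cast (by rw [min_eq_left (t j).2.2]) α.extend_one.symm)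
    have main : ∀ i : ℕ, P (nmax - i) := by
      intro i
      induction i with
      | zero =>
        obtain ⟨b, hb⟩ := hpsurj x₂
        have h1 : t (nmax - 0) = 1 := htmax _ (by omega)
        have ha : p b = α.extend ↑(t (nmax - 0)) := by
          rw [h1]
          show p b = α.extend ((1:I):ℝ)
          rw [show ((1:I):ℝ) = (1:ℝ) from rfl, α.extend_one]
          exact hb
        refine ⟨b, b, Path.refl b, ha, hb, ?_⟩
        have hEq : ((Path.refl b).map hpcont).cast ha.symm hb.symm
            = (α.truncate ↑(t (nmax - 0)) 1).cast
                (by rw [min_eq_left (t (nmax - 0)).2.2]) α.extend_one.symm := by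
          ext s
          show p b = α.extend (min (max ↑s ↑(t (nmax - 0))) 1)
          rw [h1, show ((1:I):ℝ) = (1:ℝ) from rfl, max_eq_right s.2.2, min_self, α.extend_one]
          exact hb
        rw [hEq]
      | succ i IH =>
        by_cases hj : nmax - (i+1) = nmax - i
        · rw [hj]; exact IH
        · have hj1 : nmax - (i+1) + 1 = nmax - i := by omega
          rw [← hj1] at IH
          obtain ⟨a₂, b₂, q₂, ha₂, hb₂, hh₂⟩ := IH
          have hle : (↑(t (nmax - (i+1))) : ℝ) ≤ ↑(t (nmax - (i+1) + 1)) :=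
            htmono (by omega)
          obtain ⟨z, hz⟩ := htgood (nmax - (i+1))
          -- the piece of α on [t j, t (j+1)] lies in UU z
          have hβrange : ∀ s : I, (α.truncate ↑(t (nmax - (i+1))) ↑(t (nmax - (i+1) + 1))) s ∈ UU z := by
            intro s
            show α.extend (min (max ↑s ↑(t (nmax - (i+1)))) ↑(t (nmax - (i+1) + 1))) ∈ UU z
            have h01 : (min (max (↑s:ℝ) ↑(t (nmax - (i+1)))) ↑(t (nmax - (i+1) + 1))) ∈ Icc (0:ℝ) 1 := by
              constructor
              · exact le_min (le_max_of_le_left s.2.1) (t _).2.1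
              · exact (min_le_right _ _).trans (t _).2.2
            rw [α.extend_apply h01]
            apply hz
            constructor
            · show (t (nmax - (i+1))) ≤ ⟨_, h01⟩
              exact Subtype.mk_le_mk.mpr (le_min (le_max_right _ _) hle)
            · show (⟨_, h01⟩ : I) ≤ t (nmax - (i+1) + 1)
              exact Subtype.mk_le_mk.mpr (min_le_right _ _)
          have hu₀ : α.extend (min ↑(t (nmax - (i+1))) ↑(t (nmax - (i+1) + 1))) ∈ UU z := by
            have := hβrange 0
            rwa [Path.source] at this
          have hu₁ : α.extend ↑(t (nmax - (i+1) + 1)) ∈ UU z := by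
            have := hβrange 1
            rwa [Path.target] at this
          obtain ⟨a₁, ha₁B, ha₁p⟩ := hu₀
          obtain ⟨b₁, hb₁B, hb₁p⟩ := hu₁
          obtain ⟨q₁, hq₁mem⟩ := hseg z a₁ b₁ ha₁B hb₁B
          have hpiece : ((q₁.map hpcont).cast ha₁p.symm hb₁p.symm).Homotopic
              (α.truncate ↑(t (nmax - (i+1))) ↑(t (nmax - (i+1) + 1))) := by
            apply subspace_paths_homotopic (hUsc z)
            · rintro w ⟨s, rfl⟩
              show p (q₁ s) ∈ UU z
              exact ⟨q₁ s, hq₁mem s, rfl⟩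
            · rintro w ⟨s, rfl⟩
              exact hβrange s
          -- glue
          have hpe : p b₁ = p a₂ := by rw [hb₁p, ha₂]
          obtain ⟨g, hg⟩ := hpeq hpe
          have hEnd : A g⁻¹ a₂ = b₁ := by rw [← hg, hAinv]
          have hb' : p (A g⁻¹ b₂) = x₂ := (hApq g⁻¹ b₂).trans hb₂
          have ha' : p a₁ = α.extend ↑(t (nmax - (i+1))) :=
            ha₁p.trans (by rw [min_eq_left hle])
          refine ⟨a₁, A g⁻¹ b₂,
            q₁.trans ((q₂.map (hAcont g⁻¹)).cast hEnd.symm rfl), ha', hb', ?_⟩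
          -- second factor is homotopic to the tail truncation
          have hH2 : ((((q₂.map (hAcont g⁻¹)).cast hEnd.symm rfl).map hpcont).cast
                hb₁p.symm hb'.symm).Homotopic
              ((α.truncate ↑(t (nmax - (i+1) + 1)) 1).cast
                (by rw [min_eq_left (t (nmax - (i+1) + 1)).2.2]) α.extend_one.symm) := by
            have hEqL : ((((q₂.map (hAcont g⁻¹)).cast hEnd.symm rfl).map hpcont).cast
                hb₁p.symm hb'.symm) = (q₂.map hpcont).cast ha₂.symm hb₂.symm := by
              ext s
              show p (A g⁻¹ (q₂ s)) = p (q₂ s)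
              exact hApq g⁻¹ (q₂ s)
            rw [hEqL]
            exact hh₂
          -- first factor cast to start at t j
          have hH1 : (((q₁.map hpcont).cast ha₁p.symm hb₁p.symm).cast
                (by rw [min_eq_left hle]) rfl).Homotopic
              ((α.truncate ↑(t (nmax - (i+1))) ↑(t (nmax - (i+1) + 1))).cast
                (by rw [min_eq_left hle]) rfl) :=
            cast_homotopic _ _ hpiece
          -- decomposition of the truncation
          have hH3 := trunc_decomp α (t (nmax - (i+1))).2.1 hle (t (nmax - (i+1) + 1)).2.2
          have hH3' := cast_homotopic (rfl : α.extend ↑(t (nmax - (i+1))) = _)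
            (α.extend_one.symm : x₂ = α.extend 1) hH3
          -- assemble
          have hEq1 : (((q₁.trans ((q₂.map (hAcont g⁻¹)).cast hEnd.symm rfl)).map hpcont).cast
              ha'.symm hb'.symm) =
              ((((q₁.map hpcont).cast ha₁p.symm hb₁p.symm).cast
                  (by rw [min_eq_left hle]) rfl).trans
                ((((q₂.map (hAcont g⁻¹)).cast hEnd.symm rfl).map hpcont).cast
                  hb₁p.symm hb'.symm)) := by
            ext s
            simp only [Path.cast_coe, Path.map_coe, Path.trans_apply, Function.comp_apply]
            split_ifs <;> rfl
          have hEq2 : (((α.truncate ↑(t (nmax - (i+1))) 1).cast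
                (by rw [min_eq_left (t (nmax - (i+1))).2.2]) rfl).cast rfl α.extend_one.symm) =
              ((α.truncate ↑(t (nmax - (i+1))) 1).cast
                (by rw [min_eq_left (t (nmax - (i+1))).2.2]) α.extend_one.symm) := by
            ext s; rfl
          have hEq3 : ((((α.truncate ↑(t (nmax - (i+1))) ↑(t (nmax - (i+1) + 1))).cast
                  (by rw [min_eq_left hle]) rfl).trans
                ((α.truncate ↑(t (nmax - (i+1) + 1)) 1).cast
                  (by rw [min_eq_left (t (nmax - (i+1) + 1)).2.2]) rfl)).cast rfl α.extend_one.symm) =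
              (((α.truncate ↑(t (nmax - (i+1))) ↑(t (nmax - (i+1) + 1))).cast
                  (by rw [min_eq_left hle]) rfl).trans
                ((α.truncate ↑(t (nmax - (i+1) + 1)) 1).cast
                  (by rw [min_eq_left (t (nmax - (i+1) + 1)).2.2]) α.extend_one.symm)) := by
            ext s
            simp only [Path.cast_coe, Path.trans_apply]
          rw [hEq1]
          rw [hEq2, hEq3] at hH3'
          exact (hH1.hcomp hH2).trans hH3'.symm
    have hP0 : P 0 := by
      have := main nmax
      rwa [Nat.sub_self] at this
    obtain ⟨a, b, q, ha, hb, htp⟩ := hP0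
    have hex : α.extend ↑(t 0) = x₁ := by
      rw [ht0, show ((0:I):ℝ) = (0:ℝ) from rfl, α.extend_zero]
    refine ⟨a, b, q, ha.trans hex, hb, ?_⟩
    have h' := cast_homotopic hex.symm rfl htp
    have e1 : (((q.map hpcont).cast ha.symm hb.symm).cast hex.symm rfl)
        = (q.map hpcont).cast (ha.trans hex).symm hb.symm := by
      ext s; rfl
    have e2 : ((((α.truncate ↑(t 0) 1).cast
          (by rw [min_eq_left (t 0).2.2]) α.extend_one.symm)).cast hex.symm rfl) = α := by
      ext s
      show α.extend (min (max ↑s ↑(t 0)) 1) = α s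
      rw [ht0, show ((0:I):ℝ) = (0:ℝ) from rfl, max_eq_left s.2.1, min_eq_left s.2.2]
      exact α.extend_extends' s
    rw [e1, e2] at h'
    exact h'
  -- basepoint
  obtain ⟨y₀, hy₀⟩ := hpsurj x
  haveI : PathConnectedSpace ↥Y := inferInstance
  let sp : ∀ a b : ↥Y, Path a b := fun a b => PathConnectedSpace.somePath a b
  let Ψ : ∀ (a b : ↥Y), p a = x → p b = x →
      FundamentalGroup (Quot (fun a b : ↥Y => ∃ g ∈ G, g a.1 = b.1)) x := fun a b ha hb =>
    FundamentalGroup.fromPath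
      (⟦((sp a b).map hpcont).cast ha.symm hb.symm⟧ : Path.Homotopic.Quotient x x)
  have hΨcongr : ∀ (a b a' b' : ↥Y) (h1 : a = a') (h2 : b = b')
      (ha : p a = x) (hb : p b = x) (ha' : p a' = x) (hb' : p b' = x),
      Ψ a b ha hb = Ψ a' b' ha' hb' := by
    intro a b a' b' h1 h2 ha hb ha' hb'
    subst h1; subst h2; rfl
  have hΨmul : ∀ (a b c : ↥Y) (ha : p a = x) (hb : p b = x) (hc : p c = x),
      Ψ a c ha hc = Ψ b c hb hc * Ψ a b ha hb := by
    intro a b c ha hb hc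
    show (⟦((sp a c).map hpcont).cast ha.symm hc.symm⟧ : Path.Homotopic.Quotient x x) =
      ⟦(((sp a b).map hpcont).cast ha.symm hb.symm).trans
          (((sp b c).map hpcont).cast hb.symm hc.symm)⟧
    apply Quotient.sound
    have hY := SimplyConnectedSpace.paths_homotopic (sp a c) ((sp a b).trans (sp b c))
    have h1 := cast_homotopic ha.symm hc.symm (hY.map ⟨p, hpcont⟩)
    have hEq : ((((sp a b).trans (sp b c)).map hpcont).cast ha.symm hc.symm)
        = (((sp a b).map hpcont).cast ha.symm hb.symm).trans
            (((sp b c).map hpcont).cast hb.symm hc.symm) := by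
      ext s
      simp only [Path.cast_coe, Path.map_coe, Path.trans_apply, Function.comp_apply]
      split_ifs <;> rfl
    rw [hEq] at h1
    exact h1
  have hΨtrans : ∀ (g : ↥G) (a b : ↥Y) (ha : p a = x) (hb : p b = x)
      (ha' : p (A g a) = x) (hb' : p (A g b) = x),
      Ψ a b ha hb = Ψ (A g a) (A g b) ha' hb' := by
    intro g a b ha hb ha' hb'
    show (⟦((sp a b).map hpcont).cast ha.symm hb.symm⟧ : Path.Homotopic.Quotient x x) =
      (⟦((sp (A g a) (A g b)).map hpcont).cast ha'.symm hb'.symm⟧ :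
        Path.Homotopic.Quotient x x)
    apply Quotient.sound
    have hY := SimplyConnectedSpace.paths_homotopic (sp (A g a) (A g b))
      ((sp a b).map (hAcont g))
    have h1 := cast_homotopic ha'.symm hb'.symm (hY.map ⟨p, hpcont⟩)
    have hEq : ((((sp a b).map (hAcont g)).map hpcont).cast ha'.symm hb'.symm)
        = ((sp a b).map hpcont).cast ha.symm hb.symm := by
      ext s
      exact hApq g ((sp a b) s)
    rw [hEq] at h1
    exact h1.symm
  -- the homomorphism
  have hφaux : ∀ g : ↥G, p (A g⁻¹ y₀) = x := fun g => (hApq g⁻¹ y₀).trans hy₀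
  let φ : ↥G →* FundamentalGroup (Quot (fun a b : ↥Y => ∃ g ∈ G, g a.1 = b.1)) x :=
    MonoidHom.mk' (fun g => Ψ y₀ (A g⁻¹ y₀) hy₀ (hφaux g)) (by
      intro g h
      show Ψ y₀ (A (g * h)⁻¹ y₀) hy₀ (hφaux (g * h))
          = Ψ y₀ (A g⁻¹ y₀) hy₀ (hφaux g) * Ψ y₀ (A h⁻¹ y₀) hy₀ (hφaux h)
      have hc : A (g * h)⁻¹ y₀ = A h⁻¹ (A g⁻¹ y₀) := by rw [mul_inv_rev, hAmul]
      have step1 : Ψ y₀ (A (g * h)⁻¹ y₀) hy₀ (hφaux (g * h))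
          = Ψ (A h⁻¹ y₀) (A (g * h)⁻¹ y₀) (hφaux h) (hφaux (g * h))
            * Ψ y₀ (A h⁻¹ y₀) hy₀ (hφaux h) :=
        hΨmul y₀ (A h⁻¹ y₀) (A (g * h)⁻¹ y₀) hy₀ (hφaux h) (hφaux (g * h))
      have step2 : Ψ (A h⁻¹ y₀) (A (g * h)⁻¹ y₀) (hφaux h) (hφaux (g * h))
          = Ψ y₀ (A g⁻¹ y₀) hy₀ (hφaux g) := by
        have e1 : Ψ (A h⁻¹ y₀) (A (g * h)⁻¹ y₀) (hφaux h) (hφaux (g * h))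
            = Ψ (A h⁻¹ y₀) (A h⁻¹ (A g⁻¹ y₀)) (hφaux h)
                ((hApq h⁻¹ _).trans (hφaux g)) :=
          hΨcongr _ _ _ _ rfl hc (hφaux h) (hφaux (g * h)) (hφaux h)
            ((hApq h⁻¹ _).trans (hφaux g))
        rw [e1]
        exact (hΨtrans h⁻¹ y₀ (A g⁻¹ y₀) hy₀ (hφaux g) (hφaux h)
          ((hApq h⁻¹ _).trans (hφaux g))).symm
      rw [step1, step2])
  refine ⟨φ, ?_⟩
  intro γ
  obtain ⟨α, hα⟩ := Quotient.exists_rep γ.toPath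
  obtain ⟨a, b, q, ha, hb, htp⟩ := chain x x α
  obtain ⟨g, hg⟩ := hpeq (hy₀.trans ha.symm)
  have hw : p (A g⁻¹ b) = x := (hApq g⁻¹ b).trans hb
  obtain ⟨k, hk⟩ := hpeq (hy₀.trans hw.symm)
  refine ⟨k⁻¹, ?_⟩
  show Ψ y₀ (A k⁻¹⁻¹ y₀) hy₀ (hφaux k⁻¹) = γ
  have e1 : Ψ y₀ (A k⁻¹⁻¹ y₀) hy₀ (hφaux k⁻¹) = Ψ y₀ (A g⁻¹ b) hy₀ hw :=
    hΨcongr _ _ _ _ rfl (by rw [inv_inv, hk]) hy₀ (hφaux k⁻¹) hy₀ hw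
  rw [e1]
  have e2 : Ψ y₀ (A g⁻¹ b) hy₀ hw
      = Ψ (A g y₀) (A g (A g⁻¹ b)) ((congrArg p hg).trans ha)
          ((hApq g _).trans hw) :=
    hΨtrans g y₀ (A g⁻¹ b) hy₀ hw ((congrArg p hg).trans ha) ((hApq g _).trans hw)
  have e3 : Ψ (A g y₀) (A g (A g⁻¹ b)) ((congrArg p hg).trans ha) ((hApq g _).trans hw)
      = Ψ a b ha hb := by
    refine hΨcongr _ _ _ _ hg ?_ ((congrArg p hg).trans ha) ((hApq g _).trans hw) ha hb
    rw [← hAmul, mul_inv_cancel, hAone]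
  rw [e2, e3]
  show (⟦((sp a b).map hpcont).cast ha.symm hb.symm⟧ : Path.Homotopic.Quotient x x) = γ.toPath
  rw [← hα]
  apply Quotient.sound
  have hY := SimplyConnectedSpace.paths_homotopic (sp a b) q
  have h1 := cast_homotopic ha.symm hb.symm (hY.map ⟨p, hpcont⟩)
  exact h1.trans htp
end
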